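/- arXiv:1511.03832 — 12 statements merged into one kernel-verified Lean document; each statement's English description precedes it below -/
import Mathlib

section
/- If A is an essential domain (i.e., A equals the intersection of its localizations A_P over all primes P such that A_P is a valuation domain) and B is an overring of A such that the induced map Spec(B) → Spec(A) is surjective, then A = B. -/
open scoped nonZeroDivisors

section Defs

variable (A : Type*) [CommRing A] [IsDomain A]

/-- The localization of `A` at the prime `P`, realized as a subset of the `A`-algebra `K`. -/
def locSet (K : Type*) [CommRing K] [Algebra A K] (P : Ideal A) : Set K :=
  {x | ∃ a s : A, s ∉ P ∧ x * algebraMap A K s = algebraMap A K a}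

/-- `P` is a valued prime of `A` if `A_P` is a valuation domain. -/
def ValuedPrime (P : Ideal A) : Prop :=
  ∃ h : P.IsPrime, ValuationRing (Localization.AtPrime P)

/-- `A` is an essential domain if it is the intersection of its localizations at valued primes. -/
def IsEssential : Prop :=
  Set.range (algebraMap A (FractionRing A)) =
    ⋂ P ∈ {P : Ideal A | ValuedPrime A P}, locSet A (FractionRing A) P

/-- An overring `B` of `A` is a lying over overring if `Spec B → Spec A` is surjective. -/
def LyingOverOverring (B : Subalgebra A (FractionRing A)) : Prop :=
  ∀ P : Ideal A, P.IsPrime → ∃ Q : Ideal B, Q.IsPrime ∧ Q.comap (algebraMap A B) = P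

/-- An overring `B` of `A` is a going down overring if going down holds for `A ⊆ B`. -/
def GoingDownOverring (B : Subalgebra A (FractionRing A)) : Prop :=
  ∀ P' P : Ideal A, P'.IsPrime → P.IsPrime → P' ≤ P →
    ∀ Q : Ideal B, Q.IsPrime → Q.comap (algebraMap A B) = P →
      ∃ Q' : Ideal B, Q'.IsPrime ∧ Q' ≤ Q ∧ Q'.comap (algebraMap A B) = P'

/-- `A` is perinormal if every going down overring of `A` is a flat `A`-module. -/
def Perinormal : Prop :=
  ∀ B : Subalgebra A (FractionRing A), GoingDownOverring A B → Module.Flat A B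

/-- `A` is globally perinormal if every going down overring of `A` is a fraction ring of `A`. -/
def GloballyPerinormal : Prop :=
  ∀ B : Subalgebra A (FractionRing A), GoingDownOverring A B →
    ∃ S : Submonoid A, IsLocalization S B

/-- `A` is a P-domain if `A_P` is a valuation domain for each prime `P` minimal over an ideal
of the form `(Aa : b)`. -/
def IsPDomain : Prop :=
  ∀ P : Ideal A,
    (∃ a b : A, P ∈ ((Ideal.span {a} : Ideal A).colon (Ideal.span {b})).minimalPrimes) →
      ValuedPrime A P

/-- `A` is a PVMD if for every finitely generated nonzero ideal `I` there is a finitely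
generated nonzero ideal `J` with `(IJ)_v` principal. -/
def IsPVMD : Prop :=
  ∀ I : Ideal A, I ≠ ⊥ → I.FG → ∃ J : Ideal A, J ≠ ⊥ ∧ J.FG ∧
    ∃ x : FractionRing A,
      1 / (1 / ((I : FractionalIdeal A⁰ (FractionRing A)) * (J : FractionalIdeal A⁰ (FractionRing A)))) =
        FractionalIdeal.spanSingleton A⁰ x

/-- `A` is treed if incomparable primes of `A` are comaximal. -/
def Treed : Prop :=
  ∀ P Q : Ideal A, P.IsPrime → Q.IsPrime → ¬ P ≤ Q → ¬ Q ≤ P → P ⊔ Q = ⊤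

/-- `A` is a Prüfer domain if all its localizations at maximal ideals are valuation domains. -/
def IsPrueferDom : Prop :=
  ∀ M : Ideal A, M.IsMaximal → ValuedPrime A M

/-- The set of height one primes of `A`. -/
def HtOnePrimes : Set (Ideal A) :=
  {P : Ideal A | P.IsPrime ∧ P ≠ ⊥ ∧ ∀ Q : Ideal A, Q.IsPrime → Q < P → Q = ⊥}

/-- `A` is a generalized Krull domain. -/
def IsGenKrull : Prop :=
  (Set.range (algebraMap A (FractionRing A)) =
      ⋂ P ∈ HtOnePrimes A, locSet A (FractionRing A) P) ∧
  (∀ a : A, a ≠ 0 → {P ∈ HtOnePrimes A | a ∈ P}.Finite) ∧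
  (∀ P ∈ HtOnePrimes A, ValuedPrime A P)

/-- `A` is an almost GCD domain. -/
def IsAGCD : Prop :=
  ∀ x y : A, ∃ n : ℕ, 1 ≤ n ∧
    ∃ z : A, Ideal.span {x ^ n} ⊓ Ideal.span {y ^ n} = Ideal.span {z}

/-- `A` has torsion class group (stated for a PVMD): every finitely generated nonzero
fractional ideal has a power whose `v`-closure is principal. -/
def TorsionClassGroup : Prop :=
  ∀ H : FractionalIdeal A⁰ (FractionRing A), H ≠ 0 →
    (H : Submodule A (FractionRing A)).FG →
      ∃ n : ℕ, 1 ≤ n ∧ ∃ x : FractionRing A,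
        1 / (1 / (H ^ n)) = FractionalIdeal.spanSingleton A⁰ x

/-- An overring `B` of `A` is t-linked over `A`. -/
def TLinked (B : Subalgebra A (FractionRing A)) : Prop :=
  ∀ I : Ideal A, I ≠ ⊥ → I.FG →
    ({x : FractionRing A | ∀ y ∈ I, x * algebraMap A (FractionRing A) y ∈
        Set.range (algebraMap A (FractionRing A))} =
      Set.range (algebraMap A (FractionRing A))) →
    ({x : FractionRing A | ∀ y ∈ I, x * algebraMap A (FractionRing A) y ∈ (B : Set (FractionRing A))} =
      (B : Set (FractionRing A)))

end Defs

/-! In a valuation domain `A_P` any two elements of `A` are comparable, so each `x` of the fraction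
field lies in `A_P` or satisfies `x r = s` with `r ∈ P`, `s ∉ P`. In the second case `x ∉ B` for
any overring `B` in which `P` survives (`PB ∩ A = P`), since `s = x r ∈ PB ∩ A`. Lying over makes
`P` survive in `B` for every prime `P`, so `B` lies in every valued localization, hence in `A`. -/

section ValuedPrime

variable {A : Type*} [CommRing A] [IsDomain A]

theorem exists_mul_eq_mul_of_valuationRing_atPrime (P : Ideal A) [P.IsPrime]
    [ValuationRing (Localization.AtPrime P)] (a b : A) :
    ∃ r s : A, s ∉ P ∧ (a * r = b * s ∨ b * r = a * s) := by
  let f := algebraMap A (Localization.AtPrime P)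
  have hf : Function.Injective f :=
    IsLocalization.injective _ P.primeCompl_le_nonZeroDivisors
  obtain ⟨c, hc | hc⟩ := ValuationRing.cond (f a) (f b) <;>
    obtain ⟨⟨r, s⟩, hrs⟩ := IsLocalization.surj P.primeCompl c
  · refine ⟨r, s, s.2, Or.inl (hf ?_)⟩
    simp only [map_mul]
    linear_combination f s * hc - f a * hrs
  · refine ⟨r, s, s.2, Or.inr (hf ?_)⟩
    simp only [map_mul]
    linear_combination f s * hc - f b * hrs

variable {K : Type*} [Field K] [Algebra A K] [IsFractionRing A K]

theorem mem_locSet_of_mem_subalgebra (P : Ideal A) [P.IsPrime]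
    [ValuationRing (Localization.AtPrime P)] (B : Subalgebra A K)
    (hPB : (P.map (algebraMap A B)).comap (algebraMap A B) = P) {x : K} (hx : x ∈ B) :
    x ∈ locSet A K P := by
  obtain ⟨⟨a, b⟩, hab⟩ := IsLocalization.surj A⁰ x
  have hb : algebraMap A K b ≠ 0 :=
    IsFractionRing.to_map_ne_zero_of_mem_nonZeroDivisors b.2
  have cancel : ∀ u v : A, a * u = b * v → x * algebraMap A K u = algebraMap A K v := by
    intro u v huv
    have huv' := congrArg (algebraMap A K) huv
    rw [map_mul, map_mul] at huv'
    apply mul_left_cancel₀ hb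
    linear_combination algebraMap A K u * hab + huv'
  obtain ⟨r, s, hs, hrs | hrs⟩ := exists_mul_eq_mul_of_valuationRing_atPrime P a b
  · have hxr := cancel r s hrs
    by_cases hr : r ∈ P
    · refine absurd ?_ hs
      rw [← hPB, Ideal.mem_comap]
      have hxrB : (⟨x, hx⟩ : B) * algebraMap A B r = algebraMap A B s := Subtype.ext hxr
      exact hxrB ▸ Ideal.mul_mem_left _ _ (Ideal.mem_map_of_mem _ hr)
    · exact ⟨s, r, hr, hxr⟩
  · exact ⟨r, s, hs, cancel s r (by rw [hrs, mul_comm])⟩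

end ValuedPrime

/-- An essential domain has no proper lying over overring. -/
theorem essential_no_proper_lying_over_overring
    (A : Type*) [CommRing A] [IsDomain A] (hA : IsEssential A)
    (B : Subalgebra A (FractionRing A)) (hB : LyingOverOverring A B) :
    B = ⊥ := by
  refine eq_bot_iff.2 fun x hx => ?_
  rw [Algebra.mem_bot, hA]
  exact Set.mem_iInter₂.2 fun P ⟨hP, _⟩ =>
    mem_locSet_of_mem_subalgebra P B ((Ideal.comap_map_eq_self_iff_of_isPrime P).2 (hB P hP)) hx
end

section
/- If A is an essential domain, P is a valued prime of A, and B is an overring of A with a prime P' of B lying over P, then A_P = B_{P'}. -/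
open scoped nonZeroDivisors

/-!
`A_P ⊆ B_Q` because `Q` lies over `P`. Conversely, `A_P` is a valuation ring, so an `x ∈ B_Q`
outside `A_P` has `x⁻¹ = s / a ∈ A_P` with `s ∉ P` and `a ∈ P`. Writing `x = b / t` with `t ∉ Q`
gives `t s = b a ∈ Q` in `B`, hence `s ∈ Q ∩ A = P`, a contradiction.
-/

theorem Localization.AtPrime.exists_mul_eq_mul_of_algebraMap_dvd {A : Type*} [CommRing A]
    [IsDomain A] {P : Ideal A} [P.IsPrime] {u v : A}
    (h : algebraMap A (Localization.AtPrime P) u ∣ algebraMap A (Localization.AtPrime P) v) :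
    ∃ a s : A, s ∉ P ∧ u * a = v * s := by
  obtain ⟨c, hc⟩ := h
  obtain ⟨⟨a, s⟩, hcs⟩ := IsLocalization.surj P.primeCompl c
  refine ⟨a, s, s.2, IsLocalization.injective (Localization.AtPrime P)
    P.primeCompl_le_nonZeroDivisors ?_⟩
  simp only [map_mul, hc, ← hcs, mul_assoc]

namespace locSet

variable {A K : Type*} [CommRing A] {P : Ideal A}

theorem subset_of_comap_le {B : Type*} [CommRing B] [CommRing K] [Algebra A B] [Algebra B K]
    [Algebra A K] [IsScalarTower A B K] {Q : Ideal B}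
    (h : Q.comap (algebraMap A B) ≤ P) : locSet A K P ⊆ locSet B K Q := by
  rintro x ⟨a, s, hs, hx⟩
  refine ⟨algebraMap A B a, algebraMap A B s, fun hsQ => hs (h hsQ), ?_⟩
  simpa only [← IsScalarTower.algebraMap_apply] using hx

variable [P.IsPrime]

theorem zero_mem [CommRing K] [Algebra A K] : (0 : K) ∈ locSet A K P :=
  ⟨0, 1, P.primeCompl.one_mem, by simp⟩

variable [IsDomain A] [Field K] [Algebra A K] [IsFractionRing A K]

theorem mem_of_mul_eq_of_algebraMap_dvd {x : K} {a b : A} (hb : b ≠ 0)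
    (hx : x * algebraMap A K b = algebraMap A K a)
    (hdvd : algebraMap A (Localization.AtPrime P) b ∣ algebraMap A (Localization.AtPrime P) a) :
    x ∈ locSet A K P := by
  obtain ⟨a₀, s, hs, hba⟩ := Localization.AtPrime.exists_mul_eq_mul_of_algebraMap_dvd hdvd
  refine ⟨a₀, s, hs, mul_right_cancel₀ (IsFractionRing.to_map_ne_zero_of_mem_nonZeroDivisors
    (mem_nonZeroDivisors_of_ne_zero hb)) ?_⟩
  calc x * algebraMap A K s * algebraMap A K b
      = x * algebraMap A K b * algebraMap A K s := by ring
    _ = algebraMap A K (b * a₀) := by rw [hx, hba, map_mul]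
    _ = algebraMap A K a₀ * algebraMap A K b := by rw [map_mul, mul_comm]

theorem mem_or_inv_mem [ValuationRing (Localization.AtPrime P)] (x : K) :
    x ∈ locSet A K P ∨ x⁻¹ ∈ locSet A K P := by
  rcases eq_or_ne x 0 with rfl | hx
  · exact .inl zero_mem
  obtain ⟨⟨a, ⟨b, hb⟩⟩, hab⟩ := IsLocalization.surj A⁰ x
  have hb0 : b ≠ 0 := nonZeroDivisors.ne_zero hb
  have ha0 : a ≠ 0 := by
    rintro rfl
    simp [hx, hb0] at hab
  rcases ValuationRing.dvd_total (algebraMap A (Localization.AtPrime P) b)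
      (algebraMap A (Localization.AtPrime P) a) with hdvd | hdvd
  · exact .inl (mem_of_mul_eq_of_algebraMap_dvd hb0 hab hdvd)
  · refine .inr (mem_of_mul_eq_of_algebraMap_dvd ha0 ?_ hdvd)
    rw [← hab, inv_mul_cancel_left₀ hx]

variable [ValuationRing (Localization.AtPrime P)] {B : Type*} [CommRing B] [Algebra A B]
  [Algebra B K] [IsScalarTower A B K] [FaithfulSMul B K] {Q : Ideal B} [Q.IsPrime]

theorem superset_of_comap_eq (h : Q.comap (algebraMap A B) = P) :
    locSet B K Q ⊆ locSet A K P := by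
  rintro x ⟨b, t, ht, hxt⟩
  by_contra hxP
  obtain ⟨a, s, hs, hinv⟩ := (mem_or_inv_mem x).resolve_left hxP
  have hx : x ≠ 0 := by
    rintro rfl
    exact hxP zero_mem
  have hxa : x * algebraMap A K a = algebraMap A K s := by
    rw [← hinv, mul_inv_cancel_left₀ hx]
  have haP : a ∈ P := by
    by_contra ha
    exact hxP ⟨s, a, ha, hxa⟩
  have hB : b * algebraMap A B a = t * algebraMap A B s := by
    apply FaithfulSMul.algebraMap_injective B K
    simp only [map_mul, ← IsScalarTower.algebraMap_apply, ← hxt, ← hxa]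
    ring
  have hts : t * algebraMap A B s ∈ Q := hB ▸ Q.mul_mem_left b (h.ge haP)
  exact (Ideal.IsPrime.mem_or_mem ‹_› hts).elim ht fun hsQ => hs (h.le hsQ)

theorem eq_of_comap_eq (h : Q.comap (algebraMap A B) = P) : locSet A K P = locSet B K Q :=
  (subset_of_comap_le h.le).antisymm (superset_of_comap_eq h)

end locSet

theorem essential_localization_eq_general
    (A : Type*) [CommRing A] [IsDomain A]
    (P : Ideal A) (hP : ValuedPrime A P)
    (B : Subalgebra A (FractionRing A)) (Q : Ideal B) (hQ : Q.IsPrime)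
    (hlie : Q.comap (algebraMap A B) = P) :
    locSet A (FractionRing A) P =
      {x : FractionRing A | ∃ b s : B, s ∉ Q ∧ x * (s : FractionRing A) = (b : FractionRing A)} := by
  obtain ⟨_, _⟩ := hP
  exact locSet.eq_of_comap_eq hlie

/-- If `A` is essential, `P` a valued prime and `Q` a prime of the overring `B`
lying over `P`, then `A_P = B_Q` (as subrings of the quotient field). -/
theorem essential_localization_eq
    (A : Type*) [CommRing A] [IsDomain A] (hA : IsEssential A)
    (P : Ideal A) (hP : ValuedPrime A P)
    (B : Subalgebra A (FractionRing A)) (Q : Ideal B) (hQ : Q.IsPrime)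
    (hlie : Q.comap (algebraMap A B) = P) :
    locSet A (FractionRing A) P =
      {x : FractionRing A | ∃ b s : B, s ∉ Q ∧ x * (s : FractionRing A) = (b : FractionRing A)} :=
  essential_localization_eq_general A P hP B Q hQ hlie
end

section
/- Every P-domain is perinormal: if A is a domain such that A_P is a valuation domain for every prime P minimal over an ideal of the form (a :_A b) with a, b ∈ A, then every going down overring of A is a flat A-module. -/
open scoped nonZeroDivisors

/-!
Let `B` be a going down overring of the P-domain `A`, `Q` a prime of `B` and `P = Q ∩ A`.
If some `x = a / s ∈ B` were not in `A_P`, then `P` would contain `(sA : a)`, hence a prime `P'`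
minimal over it, and `A_{P'}` is a valuation domain not containing `x`. So `x⁻¹ = r / s'` with
`r ∈ P'` and `s' ∉ P'`; going down yields a prime `Q' ⊆ Q` of `B` over `P'`, and then
`s' = x r ∈ Q' ∩ A = P'`, a contradiction. Hence `B ⊆ A_{Q ∩ A}` for all `Q`, and this makes `B`
flat: for finitely many `x_i ∈ B` the common denominators `t ∈ A` (with all `t x_i ∈ A`) generate
the unit ideal of `B`, which turns every linear relation among the `x_i` into a trivial one.
-/

theorem IsLocalization.exists_mul_eq_mul_of_dvd {R : Type*} [CommRing R] (M : Submonoid R)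
    {S : Type*} [CommRing S] [Algebra R S] [IsLocalization M S] {a b : R}
    (h : algebraMap R S a ∣ algebraMap R S b) : ∃ r, ∃ s ∈ M, b * s = a * r := by
  obtain ⟨c, hc⟩ := h
  obtain ⟨⟨r, s⟩, hrs⟩ := IsLocalization.surj M c
  have : algebraMap R S (b * s) = algebraMap R S (a * r) := by
    rw [map_mul, map_mul, hc, mul_assoc, hrs]
  obtain ⟨u, hu⟩ := (IsLocalization.eq_iff_exists M S).mp this
  exact ⟨r * u, s * u, mul_mem s.2 u.2, by linear_combination hu⟩

section LocSet

variable {A K : Type*} [CommRing A]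

theorem mem_locSet_iff_colon_not_le [CommRing K] [IsDomain K] [Algebra A K] [FaithfulSMul A K]
    {x : K} {a s : A} (hs : algebraMap A K s ≠ 0) (hx : x * algebraMap A K s = algebraMap A K a)
    (P : Ideal A) : x ∈ locSet A K P ↔ ¬ (Ideal.span {s}).colon (Ideal.span {a}) ≤ P := by
  simp only [SetLike.not_le_iff_exists, Ideal.mem_colon_span_singleton, Ideal.mem_span_singleton']
  constructor
  · rintro ⟨c, t, ht, hxt⟩
    refine ⟨t, ⟨c, FaithfulSMul.algebraMap_injective A K ?_⟩, ht⟩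
    rw [map_mul, map_mul, ← hxt, ← hx]
    ring
  · rintro ⟨t, ⟨c, hc⟩, ht⟩
    refine ⟨c, t, ht, mul_left_cancel₀ hs ?_⟩
    rw [← map_mul, mul_comm s, hc, map_mul, ← hx]
    ring

theorem Subalgebra.exists_smul_mem_range_of_mem_locSet [CommRing K] [Algebra A K]
    {B : Subalgebra A K} {P : Ideal A} {x : B} (hx : (x : K) ∈ locSet A K P) :
    ∃ t ∉ P, t • x ∈ Set.range (algebraMap A B) := by
  obtain ⟨c, t, ht, hxt⟩ := hx
  exact ⟨t, ht, c, Subtype.ext (by rw [Algebra.smul_def, mul_comm]; exact hxt.symm)⟩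

variable [IsDomain A] [Field K] [Algebra A K] [IsFractionRing A K]

/-- If `A_P` is a valuation ring, then `x ∈ A_P` or `x⁻¹` lies in the maximal ideal of `A_P`. -/
theorem mem_locSet_or_exists_mul_eq (P : Ideal A) [P.IsPrime]
    [ValuationRing (Localization.AtPrime P)] (x : K) :
    x ∈ locSet A K P ∨ ∃ r ∈ P, ∃ s ∉ P, x * algebraMap A K r = algebraMap A K s := by
  by_cases hx0 : x = 0
  · exact Or.inl ⟨0, 1, P.primeCompl.one_mem, by simp [hx0]⟩
  obtain ⟨⟨a, b⟩, hab⟩ := IsLocalization.surj A⁰ x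
  dsimp only at hab
  have hb : algebraMap A K b ≠ 0 :=
    IsFractionRing.to_map_ne_zero_of_mem_nonZeroDivisors b.2
  obtain ⟨c, hc | hc⟩ :=
    ValuationRing.cond (algebraMap A (Localization.AtPrime P) a) (algebraMap A _ b)
  · obtain ⟨r, s, hs, hrs⟩ := IsLocalization.exists_mul_eq_mul_of_dvd P.primeCompl ⟨c, hc.symm⟩
    have ha : algebraMap A K a ≠ 0 := by
      rw [← hab]
      exact mul_ne_zero hx0 hb
    have hxr : x * algebraMap A K r = algebraMap A K s := by
      have hrs' := congrArg (algebraMap A K) hrs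
      rw [map_mul, map_mul] at hrs'
      exact mul_left_cancel₀ ha (by linear_combination algebraMap A K s * hab - x * hrs')
    by_cases hr : r ∈ P
    · exact Or.inr ⟨r, hr, s, hs, hxr⟩
    · exact Or.inl ⟨s, r, hr, hxr⟩
  · obtain ⟨r, s, hs, hrs⟩ := IsLocalization.exists_mul_eq_mul_of_dvd P.primeCompl ⟨c, hc.symm⟩
    refine Or.inl ⟨r, s, hs, mul_left_cancel₀ hb ?_⟩
    rw [mul_left_comm, ← mul_assoc, hab, ← map_mul, ← map_mul, hrs]

end LocSet

section GoingDown

variable {A : Type*} [CommRing A] [IsDomain A] {B : Subalgebra A (FractionRing A)}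

theorem GoingDownOverring.subset_locSet_of_le_comap (hB : GoingDownOverring A B)
    {Q : Ideal B} [Q.IsPrime] {P : Ideal A} [P.IsPrime] [ValuationRing (Localization.AtPrime P)]
    (hPQ : P ≤ Q.comap (algebraMap A B)) : (B : Set (FractionRing A)) ⊆ locSet A _ P := by
  intro x hx
  refine (mem_locSet_or_exists_mul_eq P x).resolve_right ?_
  rintro ⟨r, hr, s, hs, hxr⟩
  obtain ⟨Q', hQ', -, rfl⟩ := hB P _ ‹_› inferInstance hPQ Q ‹_› rfl
  refine hs (show algebraMap A B s ∈ Q' from ?_)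
  have : algebraMap A B s = ⟨x, hx⟩ * algebraMap A B r := Subtype.ext hxr.symm
  exact this ▸ Q'.mul_mem_left _ hr

theorem IsPDomain.subset_locSet_of_goingDownOverring (hA : IsPDomain A)
    (hB : GoingDownOverring A B) (Q : Ideal B) [Q.IsPrime] :
    (B : Set (FractionRing A)) ⊆ locSet A _ (Q.comap (algebraMap A B)) := by
  intro x hx
  obtain ⟨⟨a, s⟩, hxs⟩ := IsLocalization.surj A⁰ x
  have hs : algebraMap A (FractionRing A) s ≠ 0 :=
    IsFractionRing.to_map_ne_zero_of_mem_nonZeroDivisors s.2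
  rw [mem_locSet_iff_colon_not_le hs hxs]
  intro hle
  obtain ⟨P', hP'min, hP'Q⟩ := Ideal.exists_minimalPrimes_le hle
  obtain ⟨_, _⟩ := hA P' ⟨s, a, hP'min⟩
  exact (mem_locSet_iff_colon_not_le hs hxs P').mp
    (hB.subset_locSet_of_le_comap hP'Q hx) hP'min.1.2

end GoingDown

section Flat

variable {A B : Type*} [CommRing A] [CommRing B] [Algebra A B]

theorem span_image_commonDenominators_eq_top
    (h : ∀ Q : Ideal B, Q.IsMaximal → ∀ x : B,
      ∃ t ∉ Q.comap (algebraMap A B), t • x ∈ Set.range (algebraMap A B))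
    {ι : Type*} [Fintype ι] (x : ι → B) :
    Ideal.span (algebraMap A B '' {t | ∀ i, t • x i ∈ Set.range (algebraMap A B)}) = ⊤ := by
  classical
  by_contra hne
  obtain ⟨Q, hQ, hle⟩ := Ideal.exists_le_maximal _ hne
  choose t ht c hc using fun i => h Q hQ (x i)
  have hprod : ∏ i, t i ∈ Q.comap (algebraMap A B) := by
    refine hle (Ideal.subset_span ⟨_, fun i => ?_, rfl⟩)
    refine ⟨c i * ∏ j ∈ Finset.univ.erase i, t j, ?_⟩
    rw [← Finset.mul_prod_erase _ t (Finset.mem_univ i), mul_comm, mul_smul, smul_comm, ← hc i,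
      map_mul, Algebra.smul_def]
  have := hQ.isPrime.comap (algebraMap A B)
  obtain ⟨i, -, hi⟩ := Ideal.IsPrime.prod_mem_iff.mp hprod
  exact ht i hi

theorem Module.Flat.of_forall_isMaximal_exists_smul_mem_range
    (hinj : Function.Injective (algebraMap A B))
    (h : ∀ Q : Ideal B, Q.IsMaximal → ∀ x : B,
      ∃ t ∉ Q.comap (algebraMap A B), t • x ∈ Set.range (algebraMap A B)) :
    Module.Flat A B := by
  rw [Module.Flat.iff_forall_isTrivialRelation]
  intro l f x hfx
  obtain ⟨n, b, g, hbg⟩ := Submodule.mem_span_set'.mp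
    ((Ideal.eq_top_iff_one _).mp (span_image_commonDenominators_eq_top h x))
  choose s hs hsg using fun j => (g j).2
  choose c hc using hs
  refine ⟨n, fun i j => c j i, b, fun i => ?_, fun j => hinj ?_⟩
  · calc x i = (∑ j, b j • (g j : B)) * x i := by rw [hbg, one_mul]
      _ = ∑ j, c j i • b j := by
        simp only [Finset.sum_mul, smul_eq_mul, ← hsg]
        exact Finset.sum_congr rfl fun j _ => by
          rw [Algebra.smul_def (c j i), hc, Algebra.smul_def, mul_assoc, mul_comm]
  · calc algebraMap A B (∑ i, f i * c j i) = s j • ∑ i, f i • x i := by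
          rw [map_sum, Finset.smul_sum]
          exact Finset.sum_congr rfl fun i _ => by
            rw [map_mul, hc, smul_comm, Algebra.smul_def (f i)]
      _ = algebraMap A B 0 := by rw [hfx, smul_zero, map_zero]

end Flat

/-- Every P-domain is perinormal. -/
theorem pdomain_perinormal (A : Type*) [CommRing A] [IsDomain A]
    (hA : IsPDomain A) : Perinormal A := by
  intro B hB
  have hinj : Function.Injective (algebraMap A B) := fun a b hab =>
    IsFractionRing.injective A (FractionRing A) (congrArg Subtype.val hab)
  refine Module.Flat.of_forall_isMaximal_exists_smul_mem_range hinj fun Q hQ x => ?_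
  have := hQ.isPrime
  exact Subalgebra.exists_smul_mem_range_of_mem_locSet
    (hA.subset_locSet_of_goingDownOverring hB Q x.2)
end

section
/- Let 𝒟 be a class of integral domains closed under localization at prime ideals. If every domain in 𝒟 has no proper lying over overring, then every domain in 𝒟 is perinormal. -/
open scoped nonZeroDivisors

/-!
Let `B` be a going down overring of `R`, `M` a maximal ideal of `B` and `P = M ∩ R`. Going down
below `M` makes `(R ∖ P)⁻¹B` a lying over overring of `R_P`, which lies in the class, so
`(R ∖ P)⁻¹B = R_P`. Hence `B ⊆ R_P`, so `B_M = R_P` is flat over `R`, and flatness of `B` is local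
on the maximal ideals of `B`.
-/

theorem isLocalization_atPrime_of_forall_exists_mul_eq {R B : Type*} [CommRing R] [CommRing B]
    [Algebra R B] (hinj : Function.Injective (algebraMap R B)) (M : Ideal B) [M.IsPrime]
    (h : ∀ b : B, ∃ r s : R, s ∉ M.comap (algebraMap R B) ∧
      b * algebraMap R B s = algebraMap R B r) :
    IsLocalization (M.comap (algebraMap R B)).primeCompl (Localization.AtPrime M) := by
  have hrP : ∀ {m : B} {r s : R}, m ∉ M → s ∉ M.comap (algebraMap R B) →
      m * algebraMap R B s = algebraMap R B r → r ∉ M.comap (algebraMap R B) := by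
    intro m r s hm hs hmr hr
    rw [Ideal.mem_comap, ← hmr] at hr
    exact (Ideal.IsPrime.mem_or_mem ‹_› hr).elim hm hs
  refine ⟨?_, ?_, ?_⟩
  · rintro ⟨s, hs⟩
    rw [IsScalarTower.algebraMap_apply R B]
    exact IsLocalization.map_units (M := M.primeCompl) _ ⟨algebraMap R B s, hs⟩
  · intro z
    obtain ⟨⟨b, t⟩, hz⟩ := IsLocalization.surj M.primeCompl z
    obtain ⟨r₁, s₁, hs₁, hb⟩ := h b
    obtain ⟨r₂, s₂, hs₂, ht⟩ := h t
    refine ⟨⟨r₁ * s₂, s₁ * r₂, Submonoid.mul_mem _ hs₁ (hrP t.2 hs₂ ht)⟩, ?_⟩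
    simp only [IsScalarTower.algebraMap_apply R B (Localization.AtPrime M), map_mul, ← ht, ← hb]
    linear_combination
      (algebraMap B _ (algebraMap R B s₁) * algebraMap B _ (algebraMap R B s₂)) * hz
  · intro x y hxy
    rw [IsScalarTower.algebraMap_apply R B (Localization.AtPrime M),
      IsScalarTower.algebraMap_apply R B (Localization.AtPrime M)] at hxy
    obtain ⟨⟨m, hm⟩, hmxy⟩ := IsLocalization.exists_of_eq (M := M.primeCompl) hxy
    obtain ⟨r, s, hs, hmr⟩ := h m
    refine ⟨⟨r, hrP hm hs hmr⟩, hinj ?_⟩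
    simp only [map_mul, ← hmr]
    linear_combination algebraMap R B s * hmxy

namespace Subalgebra

variable {R K : Type*} [CommRing R] [CommRing K] [Algebra R K] (S : Submonoid R)
  (R' : Type*) [CommRing R'] [Algebra R R'] [IsLocalization S R'] [Algebra R' K]
  [IsScalarTower R R' K] (B : Subalgebra R K)

/-- `S⁻¹B`, realized inside `K` as an `R'`-subalgebra. -/
def localization : Subalgebra R' K where
  carrier := {x | ∃ s ∈ S, x * algebraMap R K s ∈ B}
  mul_mem' := by
    rintro x y ⟨s, hs, hx⟩ ⟨t, ht, hy⟩
    refine ⟨s * t, S.mul_mem hs ht, ?_⟩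
    rw [map_mul, mul_mul_mul_comm]
    exact B.mul_mem hx hy
  add_mem' := by
    rintro x y ⟨s, hs, hx⟩ ⟨t, ht, hy⟩
    refine ⟨s * t, S.mul_mem hs ht, ?_⟩
    have := B.add_mem (B.mul_mem hx (B.algebraMap_mem t)) (B.mul_mem hy (B.algebraMap_mem s))
    convert this using 1
    rw [map_mul]
    ring
  algebraMap_mem' r' := by
    obtain ⟨⟨r, s⟩, rfl⟩ := IsLocalization.mk'_surjective S r'
    refine ⟨s, s.2, ?_⟩
    rw [IsScalarTower.algebraMap_apply R R' K s, ← map_mul, IsLocalization.mk'_spec,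
      ← IsScalarTower.algebraMap_apply]
    exact B.algebraMap_mem r

theorem le_localization : B ≤ (B.localization S R').restrictScalars R :=
  fun x hx => ⟨1, S.one_mem, by simpa using hx⟩

instance : Algebra B (B.localization S R') :=
  (Subalgebra.inclusion (B.le_localization S R')).toRingHom.toAlgebra

instance : IsScalarTower R B (B.localization S R') :=
  .of_algebraMap_eq fun _ => rfl

instance : IsLocalization (Algebra.algebraMapSubmonoid B S) (B.localization S R') := by
  refine ⟨?_, ?_, ?_⟩
  · rintro ⟨_, s, hs, rfl⟩
    refine .of_mul_eq_one (algebraMap R' _ (IsLocalization.mk' R' 1 ⟨s, hs⟩)) (Subtype.ext ?_)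
    show algebraMap R K s * algebraMap R' K (IsLocalization.mk' R' 1 ⟨s, hs⟩) = 1
    rw [IsScalarTower.algebraMap_apply R R' K, ← map_mul, IsLocalization.mul_mk'_eq_mk'_of_mul,
      mul_one, IsLocalization.mk'_self, map_one]
  · rintro ⟨x, s, hs, hx⟩
    exact ⟨⟨⟨_, hx⟩, ⟨algebraMap R B s, s, hs, rfl⟩⟩, rfl⟩
  · intro x y hxy
    obtain rfl : x = y := Subalgebra.inclusion_injective (B.le_localization S R') hxy
    exact ⟨1, rfl⟩
theorem exists_isPrime_localization_comap_eq (q : Ideal R') [q.IsPrime] (Q : Ideal B) [Q.IsPrime]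
    (hQ : Q.comap (algebraMap R B) = q.comap (algebraMap R R')) :
    ∃ Q' : Ideal (B.localization S R'), Q'.IsPrime ∧ Q'.comap (algebraMap R' _) = q := by
  have hdisj : Disjoint (S : Set R) (Q.comap (algebraMap R B)) := by
    rw [hQ]
    exact ((IsLocalization.isPrime_iff_isPrime_disjoint S R' q).mp ‹_›).2
  have hdisjB : Disjoint (Algebra.algebraMapSubmonoid B S : Set B) Q := by
    rw [Set.disjoint_left]
    rintro _ ⟨s, hs, rfl⟩ hsQ
    exact Set.disjoint_left.mp hdisj hs hsQ
  refine ⟨Q.map (algebraMap B _),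
    IsLocalization.isPrime_of_isPrime_disjoint _ _ Q ‹_› hdisjB, ?_⟩
  have hcomap : ((Q.map (algebraMap B (B.localization S R'))).comap (algebraMap R' _)).comap
      (algebraMap R R') = q.comap (algebraMap R R') := by
    rw [Ideal.comap_comap, ← IsScalarTower.algebraMap_eq, IsScalarTower.algebraMap_eq R B,
      ← Ideal.comap_comap]
    exact (congrArg _ (IsLocalization.under_map_of_isPrime_disjoint _ _ ‹_› hdisjB)).trans hQ
  rw [← IsLocalization.map_under S R' q, ← IsLocalization.map_under S R' (Ideal.comap _ _)]
  exact congrArg _ hcomap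

end Subalgebra

theorem Subalgebra.eq_bot_of_lyingOver_of_isFractionRing {A K : Type*} [CommRing A] [IsDomain A]
    [Field K] [Algebra A K] [IsFractionRing A K]
    (hA : ∀ B : Subalgebra A (FractionRing A), LyingOverOverring A B → B = ⊥)
    (C : Subalgebra A K) (hC : ∀ P : Ideal A, P.IsPrime →
      ∃ Q : Ideal C, Q.IsPrime ∧ Q.comap (algebraMap A C) = P) :
    C = ⊥ := by
  let e : K ≃ₐ[A] FractionRing A := (FractionRing.algEquiv A K).symm
  have hmap : C.map e.toAlgHom = ⊥ := by
    refine hA _ fun P hP => ?_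
    obtain ⟨Q, hQ, hQP⟩ := hC P hP
    let ρ : C ≃ₐ[A] C.map e.toAlgHom := e.subalgebraMap C
    refine ⟨Q.comap ρ.symm.toAlgHom.toRingHom, Ideal.IsPrime.comap _, ?_⟩
    rw [Ideal.comap_comap, ← hQP]
    congr 1
    exact ρ.symm.toAlgHom.comp_algebraMap
  rw [← (Subalgebra.map_injective (f := e.toAlgHom) e.injective).eq_iff, hmap,
    Algebra.map_bot]

theorem exists_mul_eq_of_goingDownOverring {R Rₚ : Type*} [CommRing R] [IsDomain R]
    [CommRing Rₚ] [IsDomain Rₚ] [Algebra R Rₚ] [Algebra Rₚ (FractionRing R)]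
    [IsScalarTower R Rₚ (FractionRing R)] {B : Subalgebra R (FractionRing R)}
    (hGD : GoingDownOverring R B) (M : Ideal B) [M.IsPrime]
    [IsLocalization.AtPrime Rₚ (M.comap (algebraMap R B))]
    (hLO : ∀ C : Subalgebra Rₚ (FractionRing Rₚ), LyingOverOverring Rₚ C → C = ⊥) (b : B) :
    ∃ r s : R, s ∉ M.comap (algebraMap R B) ∧ b * algebraMap R B s = algebraMap R B r := by
  set P := M.comap (algebraMap R B)
  have : IsFractionRing Rₚ (FractionRing R) :=
    .isFractionRing_of_isDomain_of_isLocalization P.primeCompl Rₚ (FractionRing R)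
  have hbot : B.localization P.primeCompl Rₚ = ⊥ := by
    refine Subalgebra.eq_bot_of_lyingOver_of_isFractionRing hLO _ fun q hq => ?_
    have hqP : q.comap (algebraMap R Rₚ) ≤ P := fun a ha => by
      by_contra haP
      exact Set.disjoint_left.mp
        ((IsLocalization.isPrime_iff_isPrime_disjoint P.primeCompl Rₚ q).mp hq).2 haP ha
    obtain ⟨Q, hQ, -, hQq⟩ := hGD _ P (Ideal.IsPrime.comap _) inferInstance hqP M ‹_› rfl
    exact B.exists_isPrime_localization_comap_eq _ _ q Q hQq
  have hb : (b : FractionRing R) ∈ (⊥ : Subalgebra Rₚ (FractionRing R)) :=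
    hbot ▸ B.le_localization P.primeCompl Rₚ b.2
  obtain ⟨y, hy⟩ := Algebra.mem_bot.mp hb
  obtain ⟨⟨r, s⟩, rfl⟩ := IsLocalization.mk'_surjective P.primeCompl y
  refine ⟨r, s, s.2, Subtype.ext ?_⟩
  simp only [Subalgebra.coe_mul, Subalgebra.coe_algebraMap, ← hy]
  rw [IsScalarTower.algebraMap_apply R Rₚ (FractionRing R), ← map_mul, IsLocalization.mk'_spec,
    ← IsScalarTower.algebraMap_apply]

universe u

/-- If a class of domains is closed under localization at primes and no member
has a proper lying over overring, then every member is perinormal. -/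
theorem class_no_lying_over_perinormal
    (D : ∀ (R : Type u) [CommRing R] [IsDomain R], Prop)
    (hloc : ∀ (R : Type u) [CommRing R] [IsDomain R], D R →
      ∀ (P : Ideal R) (_ : P.IsPrime), D (Localization.AtPrime P))
    (hLO : ∀ (R : Type u) [CommRing R] [IsDomain R], D R →
      ∀ B : Subalgebra R (FractionRing R), LyingOverOverring R B → B = ⊥)
    (R : Type u) [CommRing R] [IsDomain R] (hR : D R) :
    Perinormal R := by
  intro B hGD
  refine Module.flat_of_isLocalized_maximal B B (fun M _ => Localization.AtPrime M)
    (fun M _ => Algebra.linearMap B _) fun M _ => ?_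
  set P := M.comap (algebraMap R B)
  have hinj : Function.Injective (algebraMap R B) := fun x y hxy =>
    IsFractionRing.injective R (FractionRing R) (congrArg Subtype.val hxy)
  have hBP := exists_mul_eq_of_goingDownOverring hGD M (hLO _ (hloc R hR P inferInstance))
  have := isLocalization_atPrime_of_forall_exists_mul_eq hinj M hBP
  exact IsLocalization.flat _ P.primeCompl
end

section
/- Every Prüfer v-multiplication domain (PVMD) is perinormal and has no proper lying over overrings. -/
open scoped nonZeroDivisors

/-!
Let `C = (γ) : (δ)` with `γ ≠ 0` and let `P` be a prime minimal over `C`. For a finitely generated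
`H ⊆ P`, some `s ∉ P` multiplies a power of `H` into `C`, so `C ⊊ (C : H)`; any
`t ∈ (C : H) \ C` makes `tδ/γ` an element of `H⁻¹ \ A`. In a PVMD, if `(IJ)_v = xA` for
`I = (u, v)`, then `H = x⁻¹IJ` is finitely generated with `H⁻¹ = A` and lies in
`(u) : (v) + (v) : (u)`; hence `H ⊄ P`, which says that `A_P` is a valuation domain.

For `z = α/β` the ideal `{s | sz ∈ A}` is `(β) : (α)`, so if `z ∉ A_{P₀}` then `z ∉ A_P` for a prime
`P ⊆ P₀` minimal over it. But an element of an overring `B` lies in `A_P` whenever `A_P` is a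
valuation domain and `P` is contracted from `B`. Going down makes every `P ⊆ Q ∩ A` contracted, so
`B ⊆ A_{Q ∩ A}` for all maximal `Q` of `B`: the common denominators of finitely many elements of
`B` then generate the unit ideal of `B`, which is the equational criterion for flatness. Lying over
makes every `P` contracted, so `B ⊆ ⋂_M A_M = A`.
-/

open FractionalIdeal

namespace Ideal

variable {R : Type*} [CommRing R] {C P H : Ideal R}

theorem exists_mul_pow_mem_of_mem_minimalPrimes (hP : P ∈ C.minimalPrimes) {h : R} (hh : h ∈ P) :
    ∃ n : ℕ, ∃ s ∉ P, s * h ^ n ∈ C := by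
  have := hP.isPrime
  by_contra! hC
  obtain ⟨p, hp, hCp, hdisj⟩ :=
    exists_le_prime_disjoint C (P.primeCompl ⊔ Submonoid.powers h) <| by
      simp only [Set.disjoint_left, SetLike.mem_coe, Submonoid.mem_sup, Submonoid.mem_powers_iff]
      rintro _ hc ⟨s, hs, _, ⟨n, rfl⟩, rfl⟩
      exact hC n s hs hc
  have hpP : p ≤ P := fun a hap => by_contra fun haP =>
    Set.disjoint_left.mp hdisj hap (Submonoid.mem_sup_left (show a ∈ P.primeCompl from haP))
  exact Set.disjoint_left.mp hdisj (hP.2 ⟨hp, hCp⟩ hpP hh)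
    (Submonoid.mem_sup_right (Submonoid.mem_powers h))

theorem exists_notMem_mem_colon_pow_of_mem_minimalPrimes (hP : P ∈ C.minimalPrimes)
    (hH : H.FG) (hHP : H ≤ P) : ∃ n : ℕ, ∃ s ∉ P, s ∈ C.colon ↑(H ^ n) := by
  have := hP.isPrime
  simp only [Submodule.mem_colon, smul_eq_mul]
  induction H, hH using Submodule.fg_induction with
  | singleton h =>
    obtain ⟨n, s, hs, hsC⟩ := exists_mul_pow_mem_of_mem_minimalPrimes hP
      (hHP (subset_span (Set.mem_singleton h)))
    refine ⟨n, s, hs, fun w hw => ?_⟩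
    rw [submodule_span_eq, span_singleton_pow, SetLike.mem_coe, mem_span_singleton'] at hw
    obtain ⟨c, rfl⟩ := hw
    rw [mul_left_comm]
    exact C.mul_mem_left c hsC
  | sup H₁ H₂ _ _ ih₁ ih₂ =>
    obtain ⟨n₁, s₁, hs₁, h₁⟩ := ih₁ (le_sup_left.trans hHP)
    obtain ⟨n₂, s₂, hs₂, h₂⟩ := ih₂ (le_sup_right.trans hHP)
    refine ⟨n₁ + n₂, s₁ * s₂, fun h => (this.mem_or_mem h).elim hs₁ hs₂, fun w hw => ?_⟩
    obtain ⟨w₁, hw₁, w₂, hw₂, rfl⟩ := Submodule.mem_sup.mp (sup_pow_add_le_pow_sup_pow hw)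
    rw [show s₁ * s₂ * (w₁ + w₂) = s₂ * (s₁ * w₁) + s₁ * (s₂ * w₂) by ring]
    exact C.add_mem (C.mul_mem_left _ (h₁ w₁ hw₁)) (C.mul_mem_left _ (h₂ w₂ hw₂))

theorem colon_pow_le_of_colon_le (hHC : C.colon H ≤ C) (n : ℕ) : C.colon ↑(H ^ n) ≤ C := by
  induction n with
  | zero => exact fun t ht => by simpa using Submodule.mem_colon.mp ht 1 (by simp)
  | succ n ih =>
    refine fun t ht => ih (Submodule.mem_colon.mpr fun w hw => hHC (Submodule.mem_colon.mpr
      fun h hh => ?_))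
    rw [smul_eq_mul, smul_eq_mul, mul_assoc]
    exact Submodule.mem_colon.mp ht _ (pow_succ H n ▸ mul_mem_mul hw hh)

theorem lt_colon_of_mem_minimalPrimes (hP : P ∈ C.minimalPrimes) (hH : H.FG) (hHP : H ≤ P) :
    C < C.colon H := by
  refine lt_of_le_not_ge le_colon fun hHC => ?_
  obtain ⟨n, s, hs, hsC⟩ := exists_notMem_mem_colon_pow_of_mem_minimalPrimes hP hH hHP
  exact hs (hP.1.2 (colon_pow_le_of_colon_le hHC n hsC))

end Ideal

theorem Module.Flat.of_map_colon_eq_top {A B : Type*} [CommRing A] [CommRing B] [Algebra A B]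
    (hinj : Function.Injective (algebraMap A B))
    (h : ∀ (l : ℕ) (x : Fin l → B),
      ((1 : Submodule A B).colon (Set.range x)).map (algebraMap A B) = ⊤) :
    Module.Flat A B := by
  refine Module.Flat.iff_forall_isTrivialRelation.mpr fun {l f x} hfx => ?_
  obtain ⟨n, t, s, hts⟩ := Submodule.mem_span_set'.mp ((Ideal.eq_top_iff_one _).mp (h l x))
  choose σ hσ hσs using fun k => (s k).2
  choose a ha using fun k i => Submodule.mem_one.mp (Submodule.mem_colon.mp (hσ k) _ ⟨i, rfl⟩)
  refine ⟨n, fun i k => a k i, t, fun i => ?_, fun k => hinj ?_⟩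
  · calc x i = x i * ∑ k, t k • (s k : B) := by rw [hts, mul_one]
      _ = ∑ k, a k i • t k := by
        rw [Finset.mul_sum]
        refine Finset.sum_congr rfl fun k _ => ?_
        rw [smul_eq_mul, Algebra.smul_def, ha, Algebra.smul_def, ← hσs]
        ring
  · calc algebraMap A B (∑ i, f i * a k i) = algebraMap A B (σ k) * ∑ i, f i • x i := by
          simp only [map_sum, map_mul, ha, Finset.mul_sum, Algebra.smul_def]
          exact Finset.sum_congr rfl fun i _ => by ring
      _ = algebraMap A B 0 := by rw [hfx, mul_zero, map_zero]

section Denominators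

variable {A K : Type*} [CommRing A] [CommRing K] [Algebra A K]

theorem mem_locSet_iff_not_colon_le {z : K} {P : Ideal A} :
    z ∈ locSet A K P ↔ ¬ (1 : Submodule A K).colon {z} ≤ P := by
  simp only [locSet, Set.mem_ofPred_eq, SetLike.not_le_iff_exists, Submodule.mem_colon_singleton,
    Submodule.mem_one, Algebra.smul_def]
  constructor
  · rintro ⟨a, s, hs, h⟩
    exact ⟨s, ⟨a, by rw [← h, mul_comm]⟩, hs⟩
  · rintro ⟨s, ⟨a, h⟩, hs⟩
    exact ⟨a, s, hs, by rw [h, mul_comm]⟩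

theorem mem_range_of_forall_mem_locSet {z : K}
    (h : ∀ M : Ideal A, M.IsMaximal → z ∈ locSet A K M) : z ∈ Set.range (algebraMap A K) := by
  by_contra hz
  have hne : (1 : Submodule A K).colon {z} ≠ ⊤ := fun htop => hz <| by
    simpa using (Ideal.eq_top_iff_one _).mp htop
  obtain ⟨M, hM, hle⟩ := Ideal.exists_le_maximal _ hne
  exact mem_locSet_iff_not_colon_le.mp (h M hM) hle

theorem Subalgebra.map_colon_eq_top_of_forall_mem_locSet {B : Subalgebra A K}
    (h : ∀ Q : Ideal B, Q.IsMaximal → ∀ z ∈ B, z ∈ locSet A K (Q.comap (algebraMap A B)))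
    {ι : Type*} [Fintype ι] (x : ι → B) :
    ((1 : Submodule A B).colon (Set.range x)).map (algebraMap A B) = ⊤ := by
  classical
  by_contra hne
  obtain ⟨Q, hQ, hle⟩ := Ideal.exists_le_maximal _ hne
  have := hQ.isPrime
  choose a s hs hxs using fun i => h Q hQ _ (x i).2
  have hprod : ∏ i, s i ∈ (1 : Submodule A B).colon (Set.range x) := by
    refine Submodule.mem_colon.mpr ?_
    rintro _ ⟨i, rfl⟩
    rw [← Finset.mul_prod_erase _ _ (Finset.mem_univ i), mul_comm, mul_smul]
    refine Submodule.smul_mem _ _ (Submodule.mem_one.mpr ⟨a i, Subtype.ext ?_⟩)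
    change algebraMap A K (a i) = s i • (x i : K)
    rw [← hxs i, Algebra.smul_def, mul_comm]
  obtain ⟨i, -, hi⟩ := Ideal.IsPrime.prod_mem_iff.mp (Ideal.map_le_iff_le_comap.mp hle hprod)
  exact hs i hi

end Denominators

theorem Ideal.le_colon_of_coeIdeal_eq_spanSingleton_mul {A K : Type*} [CommRing A] [CommRing K]
    [Algebra A K] [IsFractionRing A K] {H : Ideal A} {y : K} {u v : A}
    {J : FractionalIdeal A⁰ K}
    (hH : (H : FractionalIdeal A⁰ K) = spanSingleton A⁰ (y * algebraMap A K u) * J)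
    (hv : spanSingleton A⁰ (y * algebraMap A K v) * J ≤ 1) :
    H ≤ (Ideal.span {u}).colon (Ideal.span {v}) := by
  intro h hh
  obtain ⟨z, hz, hzh⟩ := le_spanSingleton_mul_iff.mp hH.le _ (mem_coeIdeal_of_mem _ hh)
  obtain ⟨c, hc⟩ := (mem_one_iff _).mp (spanSingleton_mul_le_iff.mp hv z hz)
  rw [Ideal.mem_colon_span_singleton, Ideal.mem_span_singleton']
  refine ⟨c, IsFractionRing.injective A K ?_⟩
  rw [map_mul, map_mul, hc, ← hzh]
  ring

/-- `A_P` is a valuation domain, stated elementwise: of any two elements of `A`, one divides the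
other in `A_P`. -/
def DvdTotalAt {A : Type*} [CommRing A] (P : Ideal A) : Prop :=
  ∀ u v : A, ∃ s ∉ P, ∃ c, s * u = c * v ∨ s * v = c * u

section FractionRing

variable {A K : Type*} [CommRing A] [IsDomain A] [Field K] [Algebra A K] [IsFractionRing A K]

theorem FractionalIdeal.one_div_spanSingleton_inv_mul_eq_one {G : FractionalIdeal A⁰ K}
    (hG0 : G ≠ 0) (hG1 : G ≤ 1) {x : K} (hx : 1 / (1 / G) = spanSingleton A⁰ x) :
    1 / (spanSingleton A⁰ x⁻¹ * G) = 1 := by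
  have hdual0 : 1 / G ≠ 0 := fun h => one_ne_zero' (FractionalIdeal A⁰ K) <|
    le_zero_iff.mp (h ▸ (le_div_iff_mul_le hG0).2 ((one_mul G).trans_le hG1))
  have hGx : G ≤ spanSingleton A⁰ x := hx ▸ (le_div_iff_mul_le hdual0).2 mul_one_div_le_one
  have hx0 : x ≠ 0 := by
    rintro rfl
    rw [spanSingleton_zero] at hGx
    exact hG0 (le_zero_iff.mp hGx)
  have hxx : spanSingleton A⁰ x⁻¹ * spanSingleton A⁰ x = 1 := by
    rw [spanSingleton_mul_spanSingleton, inv_mul_cancel₀ hx0, spanSingleton_one]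
  have hL0 : spanSingleton A⁰ x⁻¹ * G ≠ 0 := fun h => hG0 <| by
    rw [← one_mul G, ← hxx, mul_comm (spanSingleton A⁰ x⁻¹), mul_assoc, h, mul_zero]
  refine le_antisymm ?_ ((le_div_iff_mul_le hL0).2 ?_)
  · calc 1 / (spanSingleton A⁰ x⁻¹ * G)
        = 1 / (spanSingleton A⁰ x⁻¹ * G) * spanSingleton A⁰ x⁻¹ * spanSingleton A⁰ x := by
          rw [mul_assoc, hxx, mul_one]
      _ ≤ 1 / G * (1 / (1 / G)) := by
          rw [hx]
          refine mul_le_mul_left ((le_div_iff_mul_le hG0).2 ?_) _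
          rw [mul_assoc, mul_comm]
          exact mul_one_div_le_one
      _ ≤ 1 := mul_one_div_le_one
  · rw [one_mul, ← hxx]
    exact mul_le_mul_right hGx _

theorem Ideal.not_le_of_mem_minimalPrimes_colon {γ δ : A} (hγ : γ ≠ 0) {P : Ideal A}
    (hP : P ∈ ((Ideal.span {γ}).colon (Ideal.span {δ})).minimalPrimes) {H : Ideal A}
    (hH : H.FG) (hH1 : 1 / (H : FractionalIdeal A⁰ K) = 1) : ¬ H ≤ P := by
  intro hHP
  obtain ⟨t, htH, htC⟩ := SetLike.exists_of_lt (Ideal.lt_colon_of_mem_minimalPrimes hP hH hHP)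
  have hH0 : (H : FractionalIdeal A⁰ K) ≠ 0 := fun h =>
    one_ne_zero' (FractionalIdeal A⁰ K) (by rw [← hH1, h, FractionalIdeal.div_zero])
  have hfγ : algebraMap A K γ ≠ 0 := (IsFractionRing.to_map_ne_zero_of_mem_nonZeroDivisors
    (mem_nonZeroDivisors_of_ne_zero hγ))
  have hk : algebraMap A K (t * δ) / algebraMap A K γ ∈ (1 : FractionalIdeal A⁰ K) := by
    rw [← hH1, mem_div_iff_of_ne_zero hH0]
    rintro _ ⟨h, hh, rfl⟩
    obtain ⟨e, he⟩ := Ideal.mem_span_singleton'.mp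
      (Ideal.mem_colon_span_singleton.mp (Submodule.mem_colon.mp htH h hh))
    refine (mem_one_iff _).mpr ⟨e, ?_⟩
    rw [Algebra.linearMap_apply, div_mul_eq_mul_div, eq_div_iff hfγ, ← map_mul, ← map_mul, he,
      smul_eq_mul]
    ring_nf
  obtain ⟨e, he⟩ := (mem_one_iff _).mp hk
  refine htC (Ideal.mem_colon_span_singleton.mpr (Ideal.mem_span_singleton'.mpr ⟨e, ?_⟩))
  apply IsFractionRing.injective A K
  rw [map_mul, he, div_mul_cancel₀ _ hfγ]

theorem Submodule.one_colon_singleton_eq_colon_span {z : K} {α β : A} (hβ : β ≠ 0)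
    (h : z * algebraMap A K β = algebraMap A K α) :
    (1 : Submodule A K).colon {z} = (Ideal.span {β}).colon (Ideal.span {α}) := by
  have hfβ : algebraMap A K β ≠ 0 :=
    IsFractionRing.to_map_ne_zero_of_mem_nonZeroDivisors (mem_nonZeroDivisors_of_ne_zero hβ)
  ext s
  rw [Submodule.mem_colon_singleton, Submodule.mem_one, Ideal.mem_colon_span_singleton,
    Ideal.mem_span_singleton']
  refine exists_congr fun a => ?_
  rw [← (IsFractionRing.injective A K).eq_iff, map_mul, map_mul, ← h, Algebra.smul_def,
    ← mul_assoc]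
  exact (mul_left_inj' hfβ).symm

theorem mem_locSet_of_mem_of_comap_eq {B : Subalgebra A K} {z : K} (hz : z ∈ B) {P : Ideal A}
    (hP : DvdTotalAt P) {Q : Ideal B} (hQ : Q.comap (algebraMap A B) = P) :
    z ∈ locSet A K P := by
  obtain ⟨⟨α, β⟩, hαβ⟩ := IsLocalization.surj A⁰ z
  have hfβ : algebraMap A K β ≠ 0 := IsFractionRing.to_map_ne_zero_of_mem_nonZeroDivisors β.2
  obtain ⟨s, hs, c, hsc | hsc⟩ := hP α β <;> have hsc' := congrArg (algebraMap A K) hsc <;>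
    simp only [map_mul] at hsc'
  · exact ⟨c, s, hs, mul_right_cancel₀ hfβ (by linear_combination algebraMap A K s * hαβ + hsc')⟩
  · have hzc : z * algebraMap A K c = algebraMap A K s :=
      mul_right_cancel₀ hfβ (by linear_combination algebraMap A K c * hαβ - hsc')
    refine ⟨s, c, fun hc => hs ?_, hzc⟩
    rw [← hQ] at hc ⊢
    have : algebraMap A B s = ⟨z, hz⟩ * algebraMap A B c := Subtype.ext hzc.symm
    exact Ideal.mem_comap.mpr (this ▸ Q.mul_mem_left _ hc)

end FractionRing

section PVMD

variable {A : Type*} [CommRing A] [IsDomain A]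

theorem IsPVMD.exists_fg_one_div_eq_one_le_colon_sup_colon (hA : IsPVMD A) {u : A} (hu : u ≠ 0)
    (v : A) :
    ∃ H : Ideal A, H.FG ∧ 1 / (H : FractionalIdeal A⁰ (FractionRing A)) = 1 ∧
      H ≤ (Ideal.span {u}).colon (Ideal.span {v}) ⊔ (Ideal.span {v}).colon (Ideal.span {u}) := by
  set I : Ideal A := Ideal.span {u, v}
  have hI : I ≠ ⊥ := by simp [I, hu]
  have hIfg : I.FG := Submodule.fg_span (Set.toFinite _)
  obtain ⟨J, hJ, hJfg, x, hx⟩ := hA I hI hIfg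
  rw [← coeIdeal_mul] at hx
  have hG0 : ((I * J : Ideal A) : FractionalIdeal A⁰ (FractionRing A)) ≠ 0 :=
    coeIdeal_ne_zero.mpr (mul_ne_zero hI hJ)
  have hL := one_div_spanSingleton_inv_mul_eq_one hG0 coeIdeal_le_one hx
  have hL1 :
      spanSingleton A⁰ x⁻¹ * ((I * J : Ideal A) : FractionalIdeal A⁰ (FractionRing A)) ≤ 1 := by
    have := (le_div_iff_mul_le (hL.symm ▸ one_ne_zero' _)).2 mul_one_div_le_one
    rwa [hL, FractionalIdeal.div_one] at this
  have hdecomp : spanSingleton A⁰ x⁻¹ * ((I * J : Ideal A) : FractionalIdeal A⁰ (FractionRing A)) =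
      spanSingleton A⁰ (x⁻¹ * algebraMap A _ u) * J +
        spanSingleton A⁰ (x⁻¹ * algebraMap A _ v) * J := by
    rw [coeIdeal_mul, show I = Ideal.span {u} ⊔ Ideal.span {v} from Ideal.span_insert u {v},
      coeIdeal_sup, coeIdeal_span_singleton, coeIdeal_span_singleton,
      ← spanSingleton_mul_spanSingleton, ← spanSingleton_mul_spanSingleton]
    ring
  rw [hdecomp] at hL1
  obtain ⟨H₁, hH₁⟩ := le_one_iff_exists_coeIdeal.mp (le_self_add.trans hL1)
  obtain ⟨H₂, hH₂⟩ := le_one_iff_exists_coeIdeal.mp (le_add_self.trans hL1)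
  have hH : ((H₁ ⊔ H₂ : Ideal A) : FractionalIdeal A⁰ (FractionRing A)) =
      spanSingleton A⁰ x⁻¹ * ((I * J : Ideal A) : FractionalIdeal A⁰ (FractionRing A)) := by
    rw [coeIdeal_sup, hH₁, hH₂, hdecomp]
  have hinj := IsFractionRing.injective A (FractionRing A)
  refine ⟨H₁ ⊔ H₂, (coeIdeal_fg A⁰ hinj _).mp ?_, hH ▸ hL, sup_le_sup
    (Ideal.le_colon_of_coeIdeal_eq_spanSingleton_mul hH₁ (hH₂ ▸ coeIdeal_le_one :))
    (Ideal.le_colon_of_coeIdeal_eq_spanSingleton_mul hH₂ (hH₁ ▸ coeIdeal_le_one :))⟩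
  rw [hH, coe_mul, coe_spanSingleton]
  exact (Submodule.fg_span_singleton _).mul ((coeIdeal_fg A⁰ hinj _).mpr (hIfg.mul hJfg))

theorem IsPVMD.dvdTotalAt_of_mem_minimalPrimes_colon (hA : IsPVMD A) {γ δ : A} (hγ : γ ≠ 0)
    {P : Ideal A} (hP : P ∈ ((Ideal.span {γ}).colon (Ideal.span {δ})).minimalPrimes) :
    DvdTotalAt P := by
  intro u v
  rcases eq_or_ne u 0 with rfl | hu
  · exact ⟨1, (Ideal.ne_top_iff_one P).mp hP.isPrime.ne_top, 0, Or.inl (by simp)⟩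
  obtain ⟨H, hHfg, hH1, hHle⟩ := hA.exists_fg_one_div_eq_one_le_colon_sup_colon hu v
  have hnle : ¬ _ ≤ P := fun h =>
    Ideal.not_le_of_mem_minimalPrimes_colon hγ hP hHfg hH1 (hHle.trans h)
  rw [sup_le_iff, not_and_or] at hnle
  rcases hnle with h | h <;> obtain ⟨s, hs, hsP⟩ := SetLike.not_le_iff_exists.mp h <;>
    obtain ⟨c, hc⟩ := Ideal.mem_span_singleton'.mp (Ideal.mem_colon_span_singleton.mp hs)
  · exact ⟨s, hsP, c, Or.inr hc.symm⟩
  · exact ⟨s, hsP, c, Or.inl hc.symm⟩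

theorem IsPVMD.mem_locSet_of_forall_dvdTotalAt (hA : IsPVMD A) {z : FractionRing A}
    {P₀ : Ideal A} [P₀.IsPrime]
    (hz : ∀ P ≤ P₀, P.IsPrime → DvdTotalAt P → z ∈ locSet A (FractionRing A) P) :
    z ∈ locSet A (FractionRing A) P₀ := by
  obtain ⟨⟨α, β⟩, hαβ⟩ := IsLocalization.surj A⁰ z
  have hβ : (β : A) ≠ 0 := nonZeroDivisors.ne_zero β.2
  rw [mem_locSet_iff_not_colon_le, Submodule.one_colon_singleton_eq_colon_span hβ hαβ]
  intro hle
  obtain ⟨P, hPmin, hPle⟩ := Ideal.exists_minimalPrimes_le hle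
  have hzP := hz P hPle hPmin.isPrime (hA.dvdTotalAt_of_mem_minimalPrimes_colon hβ hPmin)
  rw [mem_locSet_iff_not_colon_le, Submodule.one_colon_singleton_eq_colon_span hβ hαβ] at hzP
  exact hzP hPmin.le

theorem IsPVMD.eq_bot_of_lyingOverOverring (hA : IsPVMD A) {B : Subalgebra A (FractionRing A)}
    (hB : LyingOverOverring A B) : B = ⊥ := by
  refine eq_bot_iff.mpr fun z hz => Algebra.mem_bot.mpr <| mem_range_of_forall_mem_locSet
    fun M hM => ?_
  have := hM.isPrime
  refine hA.mem_locSet_of_forall_dvdTotalAt fun P _ hP hdiv => ?_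
  obtain ⟨Q, -, hQP⟩ := hB P hP
  exact mem_locSet_of_mem_of_comap_eq hz hdiv hQP

theorem IsPVMD.perinormal (hA : IsPVMD A) : Perinormal A := by
  intro B hB
  refine Module.Flat.of_map_colon_eq_top
    (fun a b hab => IsFractionRing.injective A (FractionRing A) (congrArg Subtype.val hab))
    fun _ x => Subalgebra.map_colon_eq_top_of_forall_mem_locSet (fun Q hQ z hz => ?_) x
  have := hQ.isPrime
  refine hA.mem_locSet_of_forall_dvdTotalAt fun P hle hP hdiv => ?_
  obtain ⟨Q', -, -, hQ'P⟩ := hB P _ hP inferInstance hle Q hQ.isPrime rfl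
  exact mem_locSet_of_mem_of_comap_eq hz hdiv hQ'P

end PVMD

/-- A PVMD is perinormal and has no proper lying over overrings. -/
theorem pvmd_perinormal_no_lying_over (A : Type*) [CommRing A] [IsDomain A]
    (hA : IsPVMD A) :
    Perinormal A ∧ ∀ B : Subalgebra A (FractionRing A), LyingOverOverring A B → B = ⊥ :=
  ⟨hA.perinormal, fun _ hB => hA.eq_bot_of_lyingOverOverring hB⟩
end

section
/- Every generalized Krull domain is perinormal. -/
open scoped nonZeroDivisors

/-!
Let `B` be a going-down overring of `A` and `Q` a maximal ideal of `B` over `p`. For a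
height-one prime `q ⊆ p`, going down provides a prime of `B` over `q`, and this forces
`B ⊆ A_q`: otherwise, `A_q` being a valuation ring, some `b ∈ B` satisfies `b d = s` with
`d ∈ q`, `s ∉ q`. Since `A_q` has dimension one, every `c ∈ q` has a power that clears
any denominator at `q`; by finite character only finitely many height-one `q ⊄ p` need
such a correction, so `t b ∈ ⋂ A_q = A` for some `t ∉ p`, i.e. `B ⊆ A_p`. Hence the
conductors `(A :_A b)` generate the unit ideal of `B`, which makes every relation in `B`
trivial and `B` flat by the equational criterion.
-/
namespace Module.Flat

variable {R B : Type*} [CommRing R] [CommRing B] [Algebra R B]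

theorem exists_notMem_comap_forall_smul_mem_one {Q : Ideal B} [Q.IsPrime] {ι : Type*} [Fintype ι]
    (h : ∀ b : B, ∃ r ∉ Q.comap (algebraMap R B), r • b ∈ (1 : Submodule R B)) (x : ι → B) :
    ∃ r ∉ Q.comap (algebraMap R B), ∀ i, r • x i ∈ (1 : Submodule R B) := by
  choose r hrQ hr using fun i => h (x i)
  refine ⟨∏ i, r i, fun hmem => ?_, fun i => ?_⟩
  · obtain ⟨i, -, hi⟩ := Ideal.IsPrime.prod_mem_iff.mp hmem
    exact hrQ i hi
  · obtain ⟨c, hc⟩ := Finset.dvd_prod_of_mem r (Finset.mem_univ i)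
    rw [hc, mul_comm, mul_smul]
    exact Submodule.smul_mem _ _ (hr i)

theorem map_colon_range_eq_top {ι : Type*} [Fintype ι]
    (h : ∀ Q : Ideal B, Q.IsMaximal →
      ∀ b : B, ∃ r ∉ Q.comap (algebraMap R B), r • b ∈ (1 : Submodule R B)) (x : ι → B) :
    ((1 : Submodule R B).colon (Set.range x)).map (algebraMap R B) = ⊤ := by
  by_contra hne
  obtain ⟨Q, hQ, hle⟩ := Ideal.exists_le_maximal _ hne
  obtain ⟨r, hrQ, hr⟩ := exists_notMem_comap_forall_smul_mem_one (h Q hQ) x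
  exact hrQ <| hle <| Ideal.mem_map_of_mem _ <|
    Submodule.mem_colon.mpr (Set.forall_mem_range.mpr hr)

theorem of_forall_exists_smul_mem_one (hinj : Function.Injective (algebraMap R B))
    (h : ∀ Q : Ideal B, Q.IsMaximal →
      ∀ b : B, ∃ r ∉ Q.comap (algebraMap R B), r • b ∈ (1 : Submodule R B)) :
    Module.Flat R B := by
  refine of_forall_isTrivialRelation fun {l f x} hfx => ?_
  have hone : (1 : B) ∈ ((1 : Submodule R B).colon (Set.range x)).map (algebraMap R B) := by
    rw [map_colon_range_eq_top h x]
    exact Submodule.mem_top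
  obtain ⟨n, β, g, hg⟩ := Submodule.mem_span_set'.mp hone
  choose j hj hjg using fun k => (g k).2
  choose w hw using fun i k =>
    Submodule.mem_one.mp (Submodule.mem_colon.mp (hj k) (x i) ⟨i, rfl⟩)
  refine ⟨n, w, β, fun i => ?_, fun k => hinj ?_⟩
  · calc x i = (∑ k, β k • (g k : B)) * x i := by rw [hg, one_mul]
      _ = ∑ k, w i k • β k := by
        simp only [Finset.sum_mul, smul_eq_mul, ← hjg, Algebra.smul_def, hw]
        exact Finset.sum_congr rfl fun k _ => by ring
  · calc algebraMap R B (∑ i, f i * w i k) = j k • ∑ i, f i • x i := by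
          simp only [map_sum, map_mul, hw, Algebra.smul_def, Finset.mul_sum]
          exact Finset.sum_congr rfl fun i _ => by ring
      _ = algebraMap R B 0 := by rw [hfx, smul_zero, map_zero]

end Module.Flat

section CommRing

variable {A : Type*} [CommRing A]

theorem algebraMap_mul_mem_locSet {L : Type*} [CommRing L] [Algebra A L] {P : Ideal A} (a : A)
    {z : L} (hz : z ∈ locSet A L P) : algebraMap A L a * z ∈ locSet A L P := by
  obtain ⟨b, s, hs, h⟩ := hz
  exact ⟨a * b, s, hs, by rw [map_mul, ← h]; ring⟩

theorem exists_mul_eq_of_mul_mk'_eq {q : Ideal A} [q.IsPrime] {u w a : A} {s : q.primeCompl}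
    (h : algebraMap A (Localization.AtPrime q) u * IsLocalization.mk' _ a s =
      algebraMap A _ w) :
    ∃ a', ∃ s' ∉ q, u * a' = w * s' := by
  rw [IsLocalization.mul_mk'_eq_mk'_of_mul, IsLocalization.mk'_eq_iff_eq_mul, ← map_mul] at h
  obtain ⟨c, hc⟩ := (IsLocalization.eq_iff_exists q.primeCompl _).mp h
  exact ⟨a * c, s * c, (s * c).prop, by linear_combination hc⟩

theorem exists_pow_mul_eq_of_mem_htOnePrimes {q : Ideal A} (hq : q ∈ HtOnePrimes A) {c y : A}
    (hc : c ∈ q) (hy : y ≠ 0) : ∃ (k : ℕ) (a : A), ∃ s ∉ q, y * a = c ^ k * s := by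
  have : q.IsPrime := hq.1
  set f := algebraMap A (Localization.AtPrime q)
  have hrad : f c ∈ (Ideal.span {f y}).radical := by
    rw [Ideal.radical_eq_sInf, Submodule.mem_sInf]
    rintro (P : Ideal _) ⟨hyP, hP⟩
    have hle : P.comap f ≤ q := (Ideal.comap_mono (IsLocalRing.le_maximalIdeal hP.ne_top)).trans
      Localization.AtPrime.under_maximalIdeal.le
    have hyP' : y ∈ P.comap f := (Ideal.span_singleton_le_iff_mem P).mp hyP
    have hne : P.comap f ≠ ⊥ := fun h0 => hy (by rwa [h0, Ideal.mem_bot] at hyP')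
    have heq : P.comap f = q := by
      by_contra hne'
      exact hne (hq.2.2 _ (hP.comap f) (lt_of_le_of_ne hle hne'))
    exact heq.ge hc
  obtain ⟨k, hk⟩ := hrad
  obtain ⟨v, hv⟩ := Ideal.mem_span_singleton'.mp hk
  obtain ⟨⟨a, s⟩, rfl⟩ := IsLocalization.mk'_surjective q.primeCompl v
  obtain ⟨a', s', hs', h⟩ :=
    exists_mul_eq_of_mul_mk'_eq (u := y) (w := c ^ k) (by rw [map_pow, ← hv, mul_comm])
  exact ⟨k, a', s', hs', h⟩

end CommRing

section IsDomain

variable {A : Type*} [CommRing A] [IsDomain A]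

local notation "K" => FractionRing A

theorem div_mul_algebraMap_eq {x y a s : A} (hy : y ∈ A⁰) (h : x * s = y * a) :
    algebraMap A K x / algebraMap A K y * algebraMap A K s = algebraMap A K a := by
  have hy' : algebraMap A K y ≠ 0 :=
    IsFractionRing.to_map_ne_zero_of_mem_nonZeroDivisors hy
  rw [div_mul_eq_mul_div, div_eq_iff hy', ← map_mul, ← map_mul, h, mul_comm]

theorem ValuedPrime.exists_mul_eq {q : Ideal A} (hq : ValuedPrime A q) (x y : A) :
    ∃ a, ∃ s ∉ q, x * a = y * s ∨ y * a = x * s := by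
  obtain ⟨_, _⟩ := hq
  obtain ⟨v, hv | hv⟩ := ValuationRing.cond (algebraMap A (Localization.AtPrime q) x)
    (algebraMap A _ y)
  all_goals obtain ⟨⟨a, s⟩, rfl⟩ := IsLocalization.mk'_surjective q.primeCompl v
  · obtain ⟨a', s', hs', h⟩ := exists_mul_eq_of_mul_mk'_eq hv
    exact ⟨a', s', hs', .inl h⟩
  · obtain ⟨a', s', hs', h⟩ := exists_mul_eq_of_mul_mk'_eq hv
    exact ⟨a', s', hs', .inr h⟩

theorem ValuedPrime.mem_locSet_or_exists {q : Ideal A} (hq : ValuedPrime A q) (z : K) :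
    z ∈ locSet A K q ∨ ∃ d ∈ q, ∃ s ∉ q, z * algebraMap A K d = algebraMap A K s := by
  obtain ⟨x, y, hy, rfl⟩ := IsFractionRing.div_surjective A z
  obtain ⟨a, s, hs, h | h⟩ := hq.exists_mul_eq x y
  · by_cases ha : a ∈ q
    · exact .inr ⟨a, ha, s, hs, div_mul_algebraMap_eq hy h⟩
    · exact .inl ⟨s, a, ha, div_mul_algebraMap_eq hy h⟩
  · exact .inl ⟨a, s, hs, div_mul_algebraMap_eq hy h.symm⟩

theorem exists_pow_mul_mem_locSet {q : Ideal A} (hq : q ∈ HtOnePrimes A) {c : A} (hc : c ∈ q)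
    (z : K) : ∃ k : ℕ, algebraMap A K (c ^ k) * z ∈ locSet A K q := by
  obtain ⟨x, y, hy, rfl⟩ := IsFractionRing.div_surjective A z
  obtain ⟨k, a, s, hs, h⟩ :=
    exists_pow_mul_eq_of_mem_htOnePrimes hq hc (nonZeroDivisors.ne_zero hy)
  refine ⟨k, ?_⟩
  rw [mul_div_left_comm]
  exact algebraMap_mul_mem_locSet x ⟨a, s, hs, div_mul_algebraMap_eq hy h.symm⟩

theorem IsGenKrull.finite_setOf_notMem_locSet (hA : IsGenKrull A) (z : K) :
    {q ∈ HtOnePrimes A | z ∉ locSet A K q}.Finite := by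
  obtain ⟨x, y, hy, rfl⟩ := IsFractionRing.div_surjective A z
  refine (hA.2.1 y (nonZeroDivisors.ne_zero hy)).subset fun q ⟨hq, hz⟩ => ⟨hq, ?_⟩
  by_contra hyq
  exact hz ⟨x, y, hyq, div_mul_algebraMap_eq hy (mul_comm x y)⟩

theorem IsGenKrull.mem_locSet_of_forall_htOnePrimes_le (hA : IsGenKrull A) {p : Ideal A}
    [p.IsPrime] {z : K} (h : ∀ q ∈ HtOnePrimes A, q ≤ p → z ∈ locSet A K q) :
    z ∈ locSet A K p := by
  set F := (hA.finite_setOf_notMem_locSet z).toFinset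
  have hF : ∀ q ∈ F, ∃ t ∉ p, algebraMap A K t * z ∈ locSet A K q := by
    intro q hqF
    rw [Set.Finite.mem_toFinset] at hqF
    obtain ⟨c, hcq, hcp⟩ := SetLike.not_le_iff_exists.mp fun hle => hqF.2 (h q hqF.1 hle)
    obtain ⟨k, hk⟩ := exists_pow_mul_mem_locSet hqF.1 hcq z
    exact ⟨c ^ k, fun hm => hcp (Ideal.IsPrime.mem_of_pow_mem ‹_› k hm), hk⟩
  choose! t htp ht using hF
  have htz : algebraMap A K (∏ q ∈ F, t q) * z ∈ ⋂ q ∈ HtOnePrimes A, locSet A K q := by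
    refine Set.mem_iInter₂.mpr fun q hq => ?_
    by_cases hqF : q ∈ F
    · obtain ⟨c, hc⟩ := Finset.dvd_prod_of_mem t hqF
      rw [hc, map_mul, mul_comm (algebraMap A K (t q)), mul_assoc]
      exact algebraMap_mul_mem_locSet _ (ht q hqF)
    · refine algebraMap_mul_mem_locSet _ (not_not.mp fun hz => hqF ?_)
      rw [Set.Finite.mem_toFinset]
      exact ⟨hq, hz⟩
  rw [← hA.1] at htz
  obtain ⟨a, ha⟩ := htz
  refine ⟨a, ∏ q ∈ F, t q, fun hm => ?_, by rw [ha, mul_comm]⟩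
  obtain ⟨q, hq, hqp⟩ := Ideal.IsPrime.prod_mem_iff.mp hm
  exact htp q hq hqp

theorem GoingDownOverring.mem_locSet {B : Subalgebra A K} (hB : GoingDownOverring A B)
    {Q : Ideal B} [Q.IsPrime] {q : Ideal A} (hq : ValuedPrime A q)
    (hqQ : q ≤ Q.comap (algebraMap A B)) (b : B) : (b : K) ∈ locSet A K q := by
  refine (hq.mem_locSet_or_exists b).resolve_right ?_
  rintro ⟨d, hd, s, hs, hbd⟩
  obtain ⟨hqprime, -⟩ := hq
  obtain ⟨Q', -, -, hQ'q⟩ := hB q _ hqprime inferInstance hqQ Q ‹_› rfl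
  have hsQ' : algebraMap A B s = b * algebraMap A B d := Subtype.ext hbd.symm
  rw [← hQ'q] at hd hs
  apply hs
  rw [Ideal.mem_comap, hsQ']
  exact Q'.mul_mem_left b hd

end IsDomain

/-- A generalized Krull domain is perinormal. -/
theorem genKrull_perinormal (A : Type*) [CommRing A] [IsDomain A]
    (hA : IsGenKrull A) : Perinormal A := by
  intro B hB
  have hinj : Function.Injective (algebraMap A B) := fun a b hab =>
    IsFractionRing.injective A (FractionRing A) (congrArg Subtype.val hab)
  refine Module.Flat.of_forall_exists_smul_mem_one hinj fun Q hQ b => ?_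
  have := hQ.isPrime
  obtain ⟨a, s, hs, hsb⟩ := hA.mem_locSet_of_forall_htOnePrimes_le
    (p := Q.comap (algebraMap A B)) fun q hq hqQ => hB.mem_locSet (hA.2.2 q hq) hqQ b
  refine ⟨s, hs, Submodule.mem_one.mpr ⟨a, Subtype.ext ?_⟩⟩
  change algebraMap A (FractionRing A) a = s • (b : FractionRing A)
  rw [← hsb, Algebra.smul_def, mul_comm]
end

section
/- A treed perinormal domain is a Prüfer domain: if A is a domain in which any two incomparable prime ideals are comaximal and A is perinormal, then A_M is a valuation domain for every maximal ideal M of A. -/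
open scoped nonZeroDivisors

/-!
Fix a maximal ideal `M`. Since `A` is treed, the primes inside `M` form a chain, and such a chain
is the image of the spectrum of a single valuation ring `V` of `Frac A` containing `A` whose
maximal ideal contracts to `M`. For a finite chain `V` is built by repeated refinement: given `V`
centered at `P ≤ P'`, compose it with a valuation ring of its residue field centered at `P'`.
The whole chain is reached by an ultralimit of these valuation rings over all finite subchains.

The primes of `V` are totally ordered and lie over every prime below `M`, so `V` is a going down
overring and hence flat by perinormality. The equational criterion of flatness then writes every
element of `V` as a fraction with denominator outside `M`, so `A_M = V` is a valuation ring.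
-/

open IsLocalRing

namespace ValuationSubring

variable {K A : Type*} [Field K] [CommRing A]

def HasCenter (V : ValuationSubring K) (f : A →+* K) (P : Ideal A) : Prop :=
  (∀ a, f a ∈ V) ∧ ∀ a, f a ∈ V.nonunits ↔ a ∈ P

theorem hasCenter_top (f : A →+* K) : (⊤ : ValuationSubring K).HasCenter f (RingHom.ker f) := by
  refine ⟨fun _ => mem_top _, fun a => ?_⟩
  simp [mem_nonunits_iff_or, RingHom.mem_ker]

theorem exists_hasCenter (f : A →+* K) (P : Ideal A) [P.IsPrime] (hker : RingHom.ker f ≤ P) :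
    ∃ V : ValuationSubring K, V.HasCenter f P := by
  have hunit (s : P.primeCompl) : IsUnit (f s) := isUnit_iff_ne_zero.mpr fun h => s.2 (hker h)
  set g := IsLocalization.lift (M := P.primeCompl) (S := Localization.AtPrime P) hunit
  obtain ⟨V, hV, _⟩ := IsLocalRing.exists_factor_valuationRing g
  have hg (a : A) : g (algebraMap A _ a) = f a := IsLocalization.lift_eq hunit a
  have hmax (x : Localization.AtPrime P) : g x ∈ V.nonunits ↔ x ∈ maximalIdeal _ := by
    rw [show g x = (g.codRestrict V.toSubring hV x : K) from rfl, coe_mem_nonunits_iff,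
      IsLocalRing.mem_maximalIdeal, IsLocalRing.mem_maximalIdeal, _root_.mem_nonunits_iff,
      _root_.mem_nonunits_iff, isUnit_map_iff]
  refine ⟨V, fun a => hg a ▸ hV _, fun a => ?_⟩
  rw [← hg, hmax, IsLocalization.AtPrime.to_map_mem_maximal_iff (Localization.AtPrime P) P]

section Composite

variable (V : ValuationSubring K) (B : ValuationSubring (ResidueField V))

theorem residue_inv {x : K} (hx : x ∈ V) (hx' : x⁻¹ ∈ V) :
    residue V ⟨x⁻¹, hx'⟩ = (residue V ⟨x, hx⟩)⁻¹ := by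
  rcases eq_or_ne x 0 with rfl | hx0
  · rw [show (⟨0⁻¹, hx'⟩ : V) = 0 from Subtype.ext inv_zero, show (⟨0, hx⟩ : V) = 0 from rfl,
      map_zero, inv_zero]
  refine eq_inv_of_mul_eq_one_right ?_
  rw [← map_mul, ← map_one (residue V)]
  exact congrArg _ (Subtype.ext (mul_inv_cancel₀ hx0))

theorem residue_eq_zero_iff_mem_nonunits {x : K} (hx : x ∈ V) :
    residue V ⟨x, hx⟩ = 0 ↔ x ∈ V.nonunits := by
  rw [residue_eq_zero_iff, ← coe_mem_nonunits_iff]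

theorem mem_map_comap_residue {x : K} :
    x ∈ (B.toSubring.comap (residue V)).map V.subtype ↔ ∃ h : x ∈ V, residue V ⟨x, h⟩ ∈ B := by
  simp only [Subring.mem_map, Subring.mem_comap, mem_toSubring]
  constructor
  · rintro ⟨y, hy, rfl⟩
    exact ⟨y.2, hy⟩
  · rintro ⟨hx, hB⟩
    exact ⟨⟨x, hx⟩, hB, rfl⟩

def composite : ValuationSubring K :=
  ofSubring ((B.toSubring.comap (residue V)).map V.subtype) fun x => by
    simp only [mem_map_comap_residue]
    by_cases hx : x ∈ V.nonunits
    · exact .inl ⟨nonunits_subset hx, by simp [(residue_eq_zero_iff_mem_nonunits V _).mpr hx]⟩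
    by_cases hx' : x⁻¹ ∈ V.nonunits
    · exact .inr ⟨nonunits_subset hx', by simp [(residue_eq_zero_iff_mem_nonunits V _).mpr hx']⟩
    rw [mem_nonunits_iff_or, not_or, not_not] at hx hx'
    rw [inv_inv] at hx'
    rcases B.mem_or_inv_mem (residue V ⟨x, hx'.2⟩) with h | h
    · exact .inl ⟨hx'.2, h⟩
    · exact .inr ⟨hx.2, residue_inv V hx'.2 hx.2 ▸ h⟩

variable {V B}

theorem mem_composite {x : K} : x ∈ V.composite B ↔ ∃ h : x ∈ V, residue V ⟨x, h⟩ ∈ B :=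
  mem_map_comap_residue V B

theorem composite_le : V.composite B ≤ V := fun _ hx => (mem_composite.mp hx).1

theorem mem_composite_nonunits {x : K} :
    x ∈ (V.composite B).nonunits ↔
      x ∈ V.nonunits ∨ ∃ h : x ∈ V, residue V ⟨x, h⟩ ∈ B.nonunits := by
  by_cases hxV : x ∈ V.nonunits
  · exact iff_of_true (nonunits_le_nonunits.mpr composite_le hxV) (.inl hxV)
  by_cases hx : x ∈ V
  · have hx0 : x ≠ 0 := fun h => hxV (h ▸ V.nonunits.zero_mem)
    have hx' : x⁻¹ ∈ V := by simpa [mem_nonunits_iff_or, hx0] using hxV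
    have hres0 : residue V ⟨x, hx⟩ ≠ 0 := (residue_eq_zero_iff_mem_nonunits V hx).not.mpr hxV
    rw [mem_nonunits_iff_or, mem_composite, or_iff_right hxV, exists_prop_of_true hx,
      mem_nonunits_iff_or, or_iff_right hx0, or_iff_right hres0, exists_prop_of_true hx',
      residue_inv V hx hx']
  · exact iff_of_false (fun h => hx (composite_le (nonunits_subset h))) (by simp [hxV, hx])

end Composite

section Refine

variable {f : A →+* K} {V : ValuationSubring K} {P : Ideal A}

noncomputable def residueHom (V : ValuationSubring K) (f : A →+* K) (hf : ∀ a, f a ∈ V) :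
    A →+* ResidueField V :=
  (residue V).comp (f.codRestrict V.toSubring hf)

theorem HasCenter.ker_residueHom (hV : V.HasCenter f P) :
    RingHom.ker (V.residueHom f hV.1) = P := by
  ext a
  exact (residue_eq_zero_iff_mem_nonunits V (hV.1 a)).trans (hV.2 a)

theorem HasCenter.composite {B : ValuationSubring (ResidueField V)} {P' : Ideal A}
    (hV : V.HasCenter f P) (hB : B.HasCenter (V.residueHom f hV.1) P') (hPP' : P ≤ P') :
    (V.composite B).HasCenter f P' := by
  refine ⟨fun a => mem_composite.mpr ⟨hV.1 a, hB.1 a⟩, fun a => ?_⟩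
  rw [mem_composite_nonunits, exists_prop_of_true (hV.1 a), hV.2 a]
  exact ⟨fun h => h.elim (fun h => hPP' h) (hB.2 a).mp, fun h => .inr ((hB.2 a).mpr h)⟩

theorem HasCenter.exists_le (hV : V.HasCenter f P) (P' : Ideal A) [P'.IsPrime] (hPP' : P ≤ P') :
    ∃ W ≤ V, W.HasCenter f P' := by
  obtain ⟨B, hB⟩ := exists_hasCenter (V.residueHom f hV.1) P' (hV.ker_residueHom.trans_le hPP')
  exact ⟨V.composite B, composite_le, hV.composite hB hPP'⟩

theorem exists_hasCenter_finset_sup {ι : Type*} [LinearOrder ι] (hf : Function.Injective f)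
    {P : ι → Ideal A} (hmono : Monotone P) [∀ i, (P i).IsPrime] (s : Finset ι) :
    ∃ V : ValuationSubring K, V.HasCenter f (s.sup P) ∧
      ∀ i ∈ s, ∃ W, V ≤ W ∧ W.HasCenter f (P i) := by
  classical
  induction s using Finset.induction_on_max with
  | empty =>
    refine ⟨⊤, ?_, by simp⟩
    rw [Finset.sup_empty, ← (RingHom.injective_iff_ker_eq_bot f).mp hf]
    exact hasCenter_top f
  | insert a s has ih =>
    obtain ⟨V, hV, hW⟩ := ih
    have hsup_le : s.sup P ≤ P a := Finset.sup_le fun i hi => hmono (has i hi).le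
    obtain ⟨V', hV'V, hV'⟩ := hV.exists_le (P a) hsup_le
    refine ⟨V', Finset.sup_insert.trans (sup_eq_left.mpr hsup_le) ▸ hV', fun i hi => ?_⟩
    rcases Finset.mem_insert.mp hi with rfl | hi
    · exact ⟨V', le_rfl, hV'⟩
    · obtain ⟨W, hVW, hW⟩ := hW i hi
      exact ⟨W, hV'V.trans hVW, hW⟩

end Refine

section UltraLimit

variable {ι : Type*}

def ultraLimit (U : Ultrafilter ι) (V : ι → ValuationSubring K) : ValuationSubring K where
  carrier := {x | ∀ᶠ i in U, x ∈ V i}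
  mul_mem' hx hy := (hx.and hy).mono fun _ h => (V _).mul_mem _ _ h.1 h.2
  one_mem' := .of_forall fun _ => one_mem _
  add_mem' hx hy := (hx.and hy).mono fun _ h => (V _).add_mem _ _ h.1 h.2
  zero_mem' := .of_forall fun _ => zero_mem _
  neg_mem' hx := hx.mono fun _ h => (V _).neg_mem _ h
  mem_or_inv_mem' x := U.eventually_or.mp (.of_forall fun i => (V i).mem_or_inv_mem x)

variable {U : Ultrafilter ι} {V W : ι → ValuationSubring K}

theorem mem_ultraLimit {x : K} : x ∈ ultraLimit U V ↔ ∀ᶠ i in U, x ∈ V i := by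
  rfl

theorem mem_ultraLimit_nonunits {x : K} :
    x ∈ (ultraLimit U V).nonunits ↔ ∀ᶠ i in U, x ∈ (V i).nonunits := by
  simp only [mem_nonunits_iff_or, mem_ultraLimit, U.eventually_or, U.eventually_not,
    Filter.eventually_const]

theorem ultraLimit_mono (h : ∀ᶠ i in U, V i ≤ W i) : ultraLimit U V ≤ ultraLimit U W :=
  fun _ hx => (h.and hx).mono fun _ h => h.1 h.2

theorem hasCenter_ultraLimit {f : A →+* K} {P : Ideal A} (h : ∀ᶠ i in U, (V i).HasCenter f P) :
    (ultraLimit U V).HasCenter f P := by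
  refine ⟨fun a => h.mono fun i hi => hi.1 a, fun a => ?_⟩
  rw [mem_ultraLimit_nonunits]
  exact (Filter.eventually_congr (h.mono fun i hi => hi.2 a)).trans Filter.eventually_const

end UltraLimit

theorem exists_hasCenter_of_isChain {f : A →+* K} (hf : Function.Injective f) {M : Ideal A}
    [M.IsPrime] (hchain : IsChain (· ≤ ·) {P : Ideal A | P.IsPrime ∧ P ≤ M}) :
    ∃ V : ValuationSubring K, V.HasCenter f M ∧
      ∀ P : Ideal A, P.IsPrime → P ≤ M → ∃ W, V ≤ W ∧ W.HasCenter f P := by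
  classical
  let ι := {P : Ideal A | P.IsPrime ∧ P ≤ M}
  let _ : LinearOrder ι := hchain.linearOrder
  have (i : ι) : (i : Ideal A).IsPrime := i.2.1
  have key (s : Finset ι) : ∃ V : ValuationSubring K, V.HasCenter f (s.sup (↑)) ∧
      ∀ i : ι, ∃ W, i ∈ s → V ≤ W ∧ W.HasCenter f i := by
    obtain ⟨V, hV, hW⟩ := exists_hasCenter_finset_sup hf (P := ((↑) : ι → Ideal A))
      (fun _ _ h => h) s
    refine ⟨V, hV, fun i => ?_⟩
    by_cases hi : i ∈ s
    · obtain ⟨W, hW⟩ := hW i hi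
      exact ⟨W, fun _ => hW⟩
    · exact ⟨⊤, fun h => absurd h hi⟩
  choose V hV W hW using key
  let U := Ultrafilter.of (Filter.atTop : Filter (Finset ι))
  have hmem (i : ι) : ∀ᶠ s in (U : Filter (Finset ι)), i ∈ s :=
    Ultrafilter.of_le _ ((Filter.eventually_ge_atTop {i}).mono fun s (hs : {i} ⊆ s) =>
      hs (Finset.mem_singleton_self i))
  refine ⟨ultraLimit U V, hasCenter_ultraLimit ((hmem ⟨M, inferInstance, le_rfl⟩).mono
    fun s hs => ?_), fun P hP hPM => ?_⟩
  · convert hV s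
    exact le_antisymm (Finset.le_sup (f := ((↑) : ι → Ideal A)) hs)
      (Finset.sup_le fun i _ => i.2.2)
  · let i : ι := ⟨P, hP, hPM⟩
    exact ⟨ultraLimit U (W · i), ultraLimit_mono ((hmem i).mono fun s hs => (hW s i hs).1),
      hasCenter_ultraLimit ((hmem i).mono fun s hs => (hW s i hs).2)⟩

section Overring

variable [Algebra A K]

def toSubalgebra (V : ValuationSubring K) (hV : ∀ a, algebraMap A K a ∈ V) : Subalgebra A K :=
  { V.toSubring with algebraMap_mem' := hV }

variable {V : ValuationSubring K} {hV : ∀ a, algebraMap A K a ∈ V} {P : Ideal A}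

def toSubalgebraEquiv : V.toSubalgebra hV ≃+* V :=
  RingEquiv.refl _

instance : ValuationRing (V.toSubalgebra hV) :=
  Function.Surjective.valuationRing (toSubalgebraEquiv (hV := hV)).symm.toRingHom
    (toSubalgebraEquiv (hV := hV)).symm.surjective

theorem mem_maximalIdeal_toSubalgebra {x : V.toSubalgebra hV} :
    x ∈ maximalIdeal (V.toSubalgebra hV) ↔ (x : K) ∈ V.nonunits := by
  rw [show (x : K) = (toSubalgebraEquiv x : V) from rfl, coe_mem_nonunits_iff,
    IsLocalRing.mem_maximalIdeal, IsLocalRing.mem_maximalIdeal, _root_.mem_nonunits_iff,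
    _root_.mem_nonunits_iff, MulEquiv.isUnit_map]

theorem HasCenter.comap_maximalIdeal (hV' : V.HasCenter (algebraMap A K) P) :
    (maximalIdeal (V.toSubalgebra hV)).comap (algebraMap A _) = P := by
  ext a
  exact mem_maximalIdeal_toSubalgebra.trans (hV'.2 a)

theorem HasCenter.exists_isPrime_comap_eq {W : ValuationSubring K} (hVW : V ≤ W)
    (hW : W.HasCenter (algebraMap A K) P) :
    ∃ Q : Ideal (V.toSubalgebra hV), Q.IsPrime ∧ Q.comap (algebraMap A _) = P := by
  refine ⟨(maximalIdeal W).comap ((inclusion V W hVW).comp toSubalgebraEquiv.toRingHom),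
    Ideal.comap_isPrime _ _, ?_⟩
  ext a
  exact coe_mem_nonunits_iff.symm.trans (hW.2 a)

end Overring

end ValuationSubring

theorem goingDownOverring_of_valuationRing {A : Type*} [CommRing A] [IsDomain A]
    (B : Subalgebra A (FractionRing A)) [ValuationRing B]
    (hB : ∀ P : Ideal A, P.IsPrime → P ≤ (maximalIdeal B).comap (algebraMap A B) →
      ∃ Q : Ideal B, Q.IsPrime ∧ Q.comap (algebraMap A B) = P) :
    GoingDownOverring A B := by
  intro P' P hP' _ hP'P Q hQ hQP
  have hPmax : P ≤ (maximalIdeal B).comap (algebraMap A B) :=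
    hQP ▸ Ideal.comap_mono (le_maximalIdeal hQ.ne_top)
  obtain ⟨Q', hQ', hQ'P'⟩ := hB P' hP' (hP'P.trans hPmax)
  rcases total_of (· ≤ ·) Q' Q with h | h
  · exact ⟨Q', hQ', h, hQ'P'⟩
  · exact ⟨Q, hQ, le_rfl, le_antisymm (hQ'P' ▸ Ideal.comap_mono h) (hQP ▸ hP'P)⟩

theorem exists_mul_eq_mul_isUnit_of_flat {R S : Type*} [CommRing R] [CommRing S] [Algebra R S]
    [Module.Flat R S] [IsLocalRing S] {s a : R} {z : S} (h : s • z = a • (1 : S)) :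
    ∃ c d : R, s * c = a * d ∧ IsUnit (algebraMap R S d) := by
  obtain ⟨k, c, y, hy, hc⟩ := Module.Flat.isTrivialRelation_of_sum_smul_eq_zero
    (f := ![s, -a]) (x := ![z, 1]) (by simp [Fin.sum_univ_two, h])
  have hone : IsUnit (∑ j, c 1 j • y j) := by simpa using (hy 1).symm ▸ isUnit_one
  obtain ⟨j, -, hj⟩ := IsLocalRing.exists_of_isUnit_sum hone
  refine ⟨c 0 j, c 1 j, ?_, ?_⟩
  · simpa [Fin.sum_univ_two, neg_mul, add_neg_eq_zero] using hc j
  · rw [Algebra.smul_def] at hj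
    exact isUnit_of_mul_isUnit_left hj

theorem isLocalization_atPrime_of_flat {A K : Type*} [CommRing A] [IsDomain A] [Field K]
    [Algebra A K] [IsFractionRing A K] (B : Subalgebra A K) [Module.Flat A B] [IsLocalRing B]
    (M : Ideal A) [M.IsPrime] (hM : (maximalIdeal B).comap (algebraMap A B) = M) :
    IsLocalization.AtPrime B M := by
  have hunit (t : A) : IsUnit (algebraMap A B t) ↔ t ∉ M := by
    rw [← hM, Ideal.mem_comap, mem_maximalIdeal, mem_nonunits_iff, not_not]
  refine ⟨fun t => (hunit t).mpr t.2, fun z => ?_, fun {x y} hxy => ⟨1, ?_⟩⟩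
  · obtain ⟨a, s, hs, hz⟩ := IsFractionRing.div_surjective (A := A) (z : K)
    have hs0 : algebraMap A K s ≠ 0 := IsFractionRing.to_map_ne_zero_of_mem_nonZeroDivisors hs
    have hsz : algebraMap A K s * z = algebraMap A K a := by
      rw [← hz, mul_div_cancel₀ _ hs0]
    obtain ⟨c, d, hcd, hd⟩ := exists_mul_eq_mul_isUnit_of_flat (s := s) (a := a) (z := z)
      (Subtype.ext (by simpa [Algebra.smul_def] using hsz))
    refine ⟨(c, ⟨d, (hunit d).mp hd⟩), Subtype.ext (mul_left_cancel₀ hs0 ?_)⟩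
    simp only [Subalgebra.coe_mul, Subalgebra.coe_algebraMap]
    rw [← mul_assoc, hsz, ← map_mul, ← map_mul, hcd]
  · simp [IsFractionRing.injective A K (congrArg Subtype.val hxy)]

theorem Treed.isChain_primes_le {A : Type*} [CommRing A] [IsDomain A] (h : Treed A)
    {M : Ideal A} (hM : M ≠ ⊤) : IsChain (· ≤ ·) {P : Ideal A | P.IsPrime ∧ P ≤ M} := by
  rintro P ⟨hP, hPM⟩ Q ⟨hQ, hQM⟩ -
  by_contra! hPQ
  exact hM (top_le_iff.mp (h P Q hP hQ hPQ.1 hPQ.2 ▸ sup_le hPM hQM))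

/-- A treed perinormal domain is a Prüfer domain. -/
theorem treed_perinormal_pruefer (A : Type*) [CommRing A] [IsDomain A]
    (htreed : Treed A) (hperi : Perinormal A) : IsPrueferDom A := by
  intro M hM
  obtain ⟨V, hV, hlying⟩ := ValuationSubring.exists_hasCenter_of_isChain
    (IsFractionRing.injective A (FractionRing A)) (htreed.isChain_primes_le hM.ne_top)
  let B := V.toSubalgebra hV.1
  have hmax : (maximalIdeal B).comap (algebraMap A B) = M := hV.comap_maximalIdeal
  have hgd : GoingDownOverring A B := goingDownOverring_of_valuationRing B fun P hP hPM => by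
    obtain ⟨W, hVW, hW⟩ := hlying P hP (hmax ▸ hPM)
    exact hW.exists_isPrime_comap_eq hVW
  have := hperi B hgd
  have := isLocalization_atPrime_of_flat B M hmax
  exact ⟨hM.isPrime, Function.Surjective.valuationRing _
    (IsLocalization.algEquiv M.primeCompl B (Localization.AtPrime M)).surjective⟩
end

section
/- A treed P-domain is a Prüfer domain. -/
open scoped nonZeroDivisors

/-! In `A_M` the image of `a` divides that of `b` exactly when `(Aa : b) ⊄ M`, so `A_M` is a
valuation ring unless both `(Aa : b)` and `(Ab : a)` lie in `M`. In that case pick primes `P`, `Q`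
minimal over them inside `M`; as `P + Q ⊆ M`, treedness makes them comparable, and the larger one
is a valued prime containing both colon ideals, which is impossible. -/

section Localization

variable {R : Type*} [CommRing R]

theorem algebraMap_dvd_iff_not_colon_le (P : Ideal R) [P.IsPrime] (a b : R) :
    algebraMap R (Localization.AtPrime P) a ∣ algebraMap R (Localization.AtPrime P) b ↔
      ¬ (Ideal.span {a}).colon (Ideal.span {b}) ≤ P := by
  constructor
  · rintro ⟨c, hc⟩
    obtain ⟨⟨n, d⟩, hd⟩ := IsLocalization.surj P.primeCompl c
    have hbd : algebraMap R (Localization.AtPrime P) (d * b) =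
        algebraMap R (Localization.AtPrime P) (n * a) := by
      rw [map_mul, map_mul, hc, ← hd]; ring
    obtain ⟨u, hu⟩ := (IsLocalization.eq_iff_exists P.primeCompl _).mp hbd
    intro hle
    refine P.primeCompl.mul_mem u.2 d.2 (hle ?_)
    rw [Ideal.mem_colon_span_singleton, Ideal.mem_span_singleton']
    exact ⟨u * n, by linear_combination -hu⟩
  · intro hle
    obtain ⟨s, hs, hsP⟩ := SetLike.not_le_iff_exists.mp hle
    obtain ⟨c, hc⟩ := Ideal.mem_span_singleton'.mp (Ideal.mem_colon_span_singleton.mp hs)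
    have hu : IsUnit (algebraMap R (Localization.AtPrime P) s) :=
      IsLocalization.map_units _ (⟨s, hsP⟩ : P.primeCompl)
    rw [← hu.dvd_mul_left, ← map_mul, ← hc, map_mul]
    exact dvd_mul_left _ _

theorem ValuationRing.of_isLocalization_of_dvd_total {S : Type*} [CommRing S] [IsDomain S]
    [Algebra R S] (M : Submonoid R) [IsLocalization M S]
    (h : ∀ a b : R, algebraMap R S a ∣ algebraMap R S b ∨ algebraMap R S b ∣ algebraMap R S a) :
    ValuationRing S := by
  have associated_algebraMap (x : S) : ∃ a : R, Associated x (algebraMap R S a) := by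
    obtain ⟨⟨a, s⟩, hx⟩ := IsLocalization.surj M x
    exact ⟨a, ⟨(IsLocalization.map_units S s).unit, hx⟩⟩
  refine ValuationRing.iff_dvd_total.mpr ⟨fun x y => ?_⟩
  obtain ⟨a, ha⟩ := associated_algebraMap x
  obtain ⟨b, hb⟩ := associated_algebraMap y
  rw [ha.dvd_iff_dvd_left, hb.dvd_iff_dvd_right, ha.dvd_iff_dvd_right, hb.dvd_iff_dvd_left]
  exact h a b

end Localization

theorem Treed.le_or_le {A : Type*} [CommRing A] (htreed : Treed A) {P Q : Ideal A}
    (hP : P.IsPrime) (hQ : Q.IsPrime) (hPQ : P ⊔ Q ≠ ⊤) : P ≤ Q ∨ Q ≤ P := by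
  by_contra! h
  exact hPQ (htreed P Q hP hQ h.1 h.2)

section PDomain

variable {A : Type*} [CommRing A] [IsDomain A]

theorem ValuedPrime.not_colon_le_or_not_colon_le {Q : Ideal A} (hQ : ValuedPrime A Q) (a b : A) :
    ¬ (Ideal.span {a}).colon (Ideal.span {b}) ≤ Q ∨
      ¬ (Ideal.span {b}).colon (Ideal.span {a}) ≤ Q := by
  obtain ⟨_, _⟩ := hQ
  simp only [← algebraMap_dvd_iff_not_colon_le]
  exact ValuationRing.dvd_total _ _

theorem IsPDomain.not_colon_le_or_not_colon_le_of_treed (htreed : Treed A) (hP : IsPDomain A)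
    (M : Ideal A) [M.IsPrime] (a b : A) :
    ¬ (Ideal.span {a}).colon (Ideal.span {b}) ≤ M ∨
      ¬ (Ideal.span {b}).colon (Ideal.span {a}) ≤ M := by
  by_contra! hle
  obtain ⟨P, hPmin, hPM⟩ := Ideal.exists_minimalPrimes_le hle.1
  obtain ⟨Q, hQmin, hQM⟩ := Ideal.exists_minimalPrimes_le hle.2
  have hsup : P ⊔ Q ≠ ⊤ := ne_top_of_le_ne_top Ideal.IsPrime.ne_top' (sup_le hPM hQM)
  rcases htreed.le_or_le hPmin.1.1 hQmin.1.1 hsup with hPQ | hQP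
  · rcases (hP Q ⟨b, a, hQmin⟩).not_colon_le_or_not_colon_le a b with hab | hba
    exacts [hab (hPmin.1.2.trans hPQ), hba hQmin.1.2]
  · rcases (hP P ⟨a, b, hPmin⟩).not_colon_le_or_not_colon_le a b with hab | hba
    exacts [hab hPmin.1.2, hba (hQmin.1.2.trans hQP)]

end PDomain

/-- A treed P-domain is a Prüfer domain. -/
theorem treed_pdomain_pruefer (A : Type*) [CommRing A] [IsDomain A]
    (htreed : Treed A) (hP : IsPDomain A) : IsPrueferDom A := by
  intro M hM
  have := hM.isPrime
  refine ⟨this, ValuationRing.of_isLocalization_of_dvd_total M.primeCompl fun a b => ?_⟩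
  simp only [algebraMap_dvd_iff_not_colon_le]
  exact hP.not_colon_le_or_not_colon_le_of_treed htreed M a b
end

section
/- A one-dimensional perinormal domain is a Prüfer domain. -/
open scoped nonZeroDivisors

/-!
Let `M` be a maximal ideal of `A` and `V` a valuation subring of the fraction field dominating
`A_M`. In dimension one going down is automatic for any overring, so `V` is flat over `A`.
For a flat overring `B` and `t ∈ B`, the equational criterion applied to the relation
`s • t = a` shows that the conductor `(A :_A t)` generates the unit ideal of `B`; since
`MV ≠ V`, the conductor of each `t ∈ V` escapes `M`, so `t ∈ A_M`. Hence `V ⊆ A_M`, and `A_M`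
is a valuation ring.
-/

theorem Module.Flat.map_colon_one_singleton_eq_top {A B : Type*} [CommRing A] [CommRing B]
    [Algebra A B] [Module.Flat A B] {t : B} {s a : A} (hs : IsSMulRegular B s)
    (hst : s • t = algebraMap A B a) :
    ((1 : Submodule A B).colon {t}).map (algebraMap A B) = ⊤ := by
  obtain ⟨k, c, y, hy, hc⟩ :=
    Module.Flat.isTrivialRelation_of_sum_smul_eq_zero (f := ![s, -a]) (x := ![t, 1])
      (by simp [Fin.sum_univ_two, hst, Algebra.algebraMap_eq_smul_one])
  have hcolon : ∀ j, c 1 j ∈ (1 : Submodule A B).colon {t} := by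
    intro j
    refine Submodule.mem_colon_singleton.mpr (Submodule.mem_one.mpr ⟨c 0 j, hs ?_⟩)
    have hcj := hc j
    simp only [Fin.sum_univ_two, Matrix.cons_val_zero, Matrix.cons_val_one] at hcj
    show s • _ = s • _
    rw [smul_comm s, hst, Algebra.smul_def, Algebra.smul_def, ← map_mul, ← map_mul]
    congr 1
    linear_combination hcj
  have hone : (1 : B) = ∑ j, algebraMap A B (c 1 j) * y j := by
    simpa [Algebra.smul_def] using hy 1
  rw [Ideal.eq_top_iff_one, hone]
  exact Ideal.sum_mem _ fun j _ => Ideal.mul_mem_right _ _ (Ideal.mem_map_of_mem _ (hcolon j))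

section Overring

variable {A : Type*} [CommRing A] [IsDomain A]

theorem goingDownOverring_of_dimensionLEOne [Ring.DimensionLEOne A]
    (B : Subalgebra A (FractionRing A)) : GoingDownOverring A B := by
  intro P' P hP' hP hle Q hQ hQP
  by_cases hP'0 : P' = ⊥
  · subst hP'0
    have hinj : Function.Injective (algebraMap A B) := by
      refine .of_comp (f := algebraMap B (FractionRing A)) ?_
      rw [← RingHom.coe_comp, ← IsScalarTower.algebraMap_eq]
      exact IsFractionRing.injective A (FractionRing A)
    exact ⟨⊥, Ideal.isPrime_bot, bot_le, (RingHom.injective_iff_ker_eq_bot _).mp hinj⟩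
  · obtain rfl : P' = P := (hP'.isMaximal hP'0).eq_of_le hP.ne_top hle
    exact ⟨Q, hQ, le_rfl, hQP⟩

theorem isInteger_of_flat_of_map_ne_top (B : Subalgebra A (FractionRing A)) [Module.Flat A B]
    (P : Ideal A) [P.IsPrime] (hP : P.map (algebraMap A B) ≠ ⊤) (t : B) :
    IsLocalization.IsInteger (Localization.AtPrime P) (t : FractionRing A) := by
  obtain ⟨⟨a, s⟩, hst⟩ := IsLocalization.surj A⁰ (t : FractionRing A)
  have hs : IsSMulRegular B (s : A) := fun x y hxy => Subtype.ext <| mul_left_cancel₀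
    (IsFractionRing.to_map_ne_zero_of_mem_nonZeroDivisors s.2)
    (by simpa [Algebra.smul_def] using congrArg Subtype.val hxy)
  obtain ⟨d, hdt, hdP⟩ : ∃ d ∈ (1 : Submodule A B).colon {t}, d ∉ P := by
    by_contra! hle
    refine hP (top_le_iff.mp ?_)
    rw [← Module.Flat.map_colon_one_singleton_eq_top hs (a := a) (Subtype.ext ?_)]
    · exact Ideal.map_mono hle
    · simpa [Algebra.smul_def, mul_comm] using hst
  obtain ⟨c, hc⟩ := Submodule.mem_one.mp (Submodule.mem_colon_singleton.mp hdt)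
  have hd : algebraMap A (FractionRing A) d ≠ 0 :=
    IsFractionRing.to_map_ne_zero_of_mem_nonZeroDivisors
      (mem_nonZeroDivisors_of_ne_zero (by rintro rfl; exact hdP P.zero_mem))
  refine ⟨IsLocalization.mk' _ c (⟨d, hdP⟩ : P.primeCompl), mul_left_cancel₀ hd ?_⟩
  rw [IsScalarTower.algebraMap_apply A (Localization.AtPrime P) (FractionRing A) d, ← map_mul,
    IsLocalization.mk'_spec' (Localization.AtPrime P) c (⟨d, hdP⟩ : P.primeCompl),
    ← IsScalarTower.algebraMap_apply, ← IsScalarTower.algebraMap_apply]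
  simpa [Algebra.smul_def] using congrArg Subtype.val hc

theorem map_ne_top_of_le_localSubring (P : Ideal A) [P.IsPrime] (V : Subring (FractionRing A))
    [IsLocalRing V] (hV : ∀ x, algebraMap (Localization.AtPrime P) (FractionRing A) x ∈ V)
    [IsLocalHom ((algebraMap (Localization.AtPrime P) (FractionRing A)).codRestrict V hV)]
    (B : Subalgebra A (FractionRing A)) (hBV : ∀ x ∈ B, x ∈ V) :
    P.map (algebraMap A B) ≠ ⊤ := by
  let e : B →+* V := (RingHom.id _).restrict B V hBV
  refine ne_top_of_le_ne_top (Ideal.comap_ne_top e (IsLocalRing.maximalIdeal.isMaximal V).ne_top)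
    (Ideal.map_le_iff_le_comap.mpr fun p hp hunit => ?_)
  have he : e (algebraMap A B p) =
      (algebraMap (Localization.AtPrime P) (FractionRing A)).codRestrict V hV
        (algebraMap A (Localization.AtPrime P) p) :=
    Subtype.ext (IsScalarTower.algebraMap_apply A (Localization.AtPrime P) (FractionRing A) p)
  rw [he] at hunit
  exact (IsLocalization.AtPrime.isUnit_to_map_iff _ P p).mp hunit.of_map hp

theorem valuationRing_of_valuationSubring_le (P : Ideal A) [P.IsPrime]
    (V : ValuationSubring (FractionRing A))
    (hV : ∀ x ∈ V, IsLocalization.IsInteger (Localization.AtPrime P) x) :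
    ValuationRing (Localization.AtPrime P) :=
  (ValuationRing.iff_isInteger_or_isInteger _ (FractionRing A)).mpr fun x =>
    (V.mem_or_inv_mem x).imp (hV x) (hV x⁻¹)

end Overring

/-- A one-dimensional perinormal domain is a Prüfer domain. -/
theorem one_dim_perinormal_pruefer (A : Type*) [CommRing A] [IsDomain A]
    (hdim : ∀ P : Ideal A, P.IsPrime → P ≠ ⊥ → P.IsMaximal)
    (hperi : Perinormal A) : IsPrueferDom A := by
  intro M hM
  have hMprime := hM.isPrime
  have : Ring.DimensionLEOne A := ⟨fun hP0 hP => hdim _ hP hP0⟩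
  obtain ⟨V, hAV, hloc⟩ := IsLocalRing.exists_factor_valuationRing
    (algebraMap (Localization.AtPrime M) (FractionRing A))
  let B : Subalgebra A (FractionRing A) :=
    { V.toSubring with
      algebraMap_mem' := fun a => by
        rw [IsScalarTower.algebraMap_apply A (Localization.AtPrime M)]
        exact hAV _ }
  have : Module.Flat A B := hperi B (goingDownOverring_of_dimensionLEOne B)
  have : IsLocalRing V.toSubring := V.isLocalRing
  have hMB : M.map (algebraMap A B) ≠ ⊤ :=
    map_ne_top_of_le_localSubring M V.toSubring hAV B fun _ h => h
  exact ⟨hMprime, valuationRing_of_valuationSubring_le M V fun x hx =>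
    isInteger_of_flat_of_map_ne_top B M hMB ⟨x, hx⟩⟩
end

section
/- In the pullback of Theorem 12 (A = π^{-1}(K) for π : B → B/M and K a proper subfield of B/M), going down holds for the extension A ⊆ B. -/
open scoped nonZeroDivisors

/-!
Every `f ∈ M` lies in the conductor of `A ⊆ B`, so `A_f = B_f`, and a prime `p` of `A` avoiding `f`
is the contraction of the prime `{b | f * b ∈ p} = p A_f ∩ B` of `B`. Given primes `p < Q ∩ A`: if
`M ⊄ Q`, pick `f ∈ M \ Q`, and this prime lies in `Q`. Otherwise `Q = M`; pick `f ∈ (M ∩ A) \ p`,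
and the prime lies in `M` because an ideal of `B` not contained in `M` meets `A` outside `M`.
-/

namespace Subring

variable {B : Type*} [CommRing B] {A : Subring B}

lemma exists_isPrime_liesOver_of_mul_mem {P : Ideal A} [hP : P.IsPrime] {f : A}
    (hf : ∀ b : B, (f : B) * b ∈ A) (hfP : f ∉ P) :
    ∃ Q : Ideal B, Q.IsPrime ∧ Q.LiesOver P ∧ ∀ b ∈ Q, (⟨f * b, hf b⟩ : A) ∈ P := by
  let φ : B →+ A := AddMonoidHom.mk' (fun b => ⟨f * b, hf b⟩) fun x y => Subtype.ext (mul_add ..)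
  have φ_mul (x y : B) : φ x * φ y = f * φ (x * y) := Subtype.ext <| by
    simp only [φ, AddMonoidHom.mk'_apply, MulMemClass.coe_mul]; ring
  have φ_one : φ 1 = f := Subtype.ext (mul_one _)
  have φ_coe (a : A) : φ a = f * a := rfl
  have cancel {a : A} (h : f * a ∈ P) : a ∈ P := (hP.mem_or_mem h).resolve_left hfP
  let Q : Ideal B :=
    { carrier := φ ⁻¹' P
      zero_mem' := by simp
      add_mem' {x y} hx hy := by simpa using P.add_mem hx hy
      smul_mem' c x hx := cancel <| by simpa [← φ_mul] using P.mul_mem_left (φ c) hx }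
  refine ⟨Q, ⟨fun h => hfP ?_, fun {x y} hxy => ?_⟩, ⟨?_⟩, fun _ => id⟩
  · exact φ_one ▸ (Q.eq_top_iff_one.mp h : φ 1 ∈ P)
  · exact hP.mem_or_mem (by simpa [φ_mul] using P.mul_mem_left f (hxy : φ (x * y) ∈ P))
  · ext a
    exact ⟨fun h => P.mul_mem_left f h, fun h => cancel (φ_coe a ▸ h)⟩

variable {M : Ideal B}

lemma le_of_under_le_under (hM : M.IsMaximal) (hMA : (M : Set B) ⊆ A) {I : Ideal B}
    (hI : I.under A ≤ M.under A) : I ≤ M := by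
  intro x hxI
  by_contra hxM
  obtain ⟨y, m, hm, hym⟩ := hM.exists_inv hxM
  have hyx : y * x ∈ A := by
    rw [eq_sub_of_add_eq hym]
    exact sub_mem (one_mem A) (hMA hm)
  have : (⟨y * x, hyx⟩ : A) ∈ M.under A := hI (I.mul_mem_left y hxI)
  exact hM.ne_top ((M.eq_top_iff_one).mpr (hym ▸ M.add_mem this hm))

theorem hasGoingDown_of_isMaximal_of_subset (hM : M.IsMaximal) (hMA : (M : Set B) ⊆ A) :
    Algebra.HasGoingDown A B where
  exists_ideal_le_liesOver_of_lt {p} _ Q hQ hpQ := by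
    have hf {f : B} (hfM : f ∈ M) (b : B) : f * b ∈ A := hMA (M.mul_mem_right b hfM)
    by_cases hMQ : M ≤ Q
    · obtain rfl : M = Q := hM.eq_of_le hQ.ne_top hMQ
      obtain ⟨f, hfM, hfp⟩ := SetLike.exists_of_lt hpQ
      obtain ⟨Q', hQ', hQ'p, -⟩ := exists_isPrime_liesOver_of_mul_mem (hf hfM) hfp
      exact ⟨Q', le_of_under_le_under hM hMA (hQ'p.over ▸ hpQ.le), hQ', hQ'p⟩
    · obtain ⟨g, hgM, hgQ⟩ := SetLike.not_le_iff_exists.mp hMQ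
      have hgp : (⟨g, hMA hgM⟩ : A) ∉ p := fun h => hgQ (hpQ.le h)
      obtain ⟨Q', hQ', hQ'p, hQ'g⟩ := exists_isPrime_liesOver_of_mul_mem (hf hgM) hgp
      exact ⟨Q', fun b hb => (hQ.mem_or_mem (hpQ.le (hQ'g b hb))).resolve_left hgQ, hQ', hQ'p⟩

end Subring

theorem pullback_going_down_general
    (B : Type*) [CommRing B] (M : Ideal B) (hM : M.IsMaximal)
    (K : Subring (B ⧸ M))
    (A : Subring B) (hA : A = Subring.comap (Ideal.Quotient.mk M) K) :
    ∀ P' P : Ideal A, P'.IsPrime → P.IsPrime → P' ≤ P →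
      ∀ Q : Ideal B, Q.IsPrime → Q.comap A.subtype = P →
        ∃ Q' : Ideal B, Q'.IsPrime ∧ Q' ≤ Q ∧ Q'.comap A.subtype = P' := by
  intro P' P _ _ hP'P Q _ hQP
  have hMA : (M : Set B) ⊆ A := fun b hb => by
    simp [hA, Ideal.Quotient.eq_zero_iff_mem.mpr hb, K.zero_mem]
  have := Subring.hasGoingDown_of_isMaximal_of_subset hM hMA
  have : Q.LiesOver P := ⟨hQP.symm⟩
  obtain ⟨Q', hQ'Q, hQ', hQ'P'⟩ := Ideal.exists_ideal_le_liesOver_of_le (R := A) Q hP'P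
  exact ⟨Q', hQ', hQ'Q, hQ'P'.over.symm⟩

/-- going down holds for `A ⊆ B` where `A` is the pullback of a proper
subfield `K` of `B/M`. -/
theorem pullback_going_down
    (B : Type*) [CommRing B] [IsDomain B] (M : Ideal B) (hM : M.IsMaximal)
    (K : Subring (B ⧸ M))
    (hfield : ∀ x ∈ K, x ≠ 0 → ∃ y ∈ K, x * y = 1)
    (hproper : K ≠ ⊤)
    (A : Subring B) (hA : A = Subring.comap (Ideal.Quotient.mk M) K) :
    ∀ P' P : Ideal A, P'.IsPrime → P.IsPrime → P' ≤ P →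
      ∀ Q : Ideal B, Q.IsPrime → Q.comap A.subtype = P →
        ∃ Q' : Ideal B, Q'.IsPrime ∧ Q' ≤ Q ∧ Q'.comap A.subtype = P' :=
  pullback_going_down_general B M hM K A hA
end

section
/- For an almost GCD domain A, the following are equivalent: (a) A is globally perinormal; (b) A is perinormal; (c) A is integrally closed. -/
open scoped nonZeroDivisors

/-!
Write `x ∈ K` as `a / b`. An almost GCD relation `(aⁿ) ∩ (bⁿ) = (z)` yields `s xⁿ = t` with `s`, `t`
coprime in the strong sense that `s ∣ t w` forces `s ∣ w`. If `x` is integral, so is `xⁿ = t / s`,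
whence `s ∣ tᵐ` and `s` is a unit: the integral closure `A'` is a root extension of `A`, so it is a
going down overring. If `A` is perinormal, `A'` is flat, hence faithfully flat, hence `A' = A`.
Conversely, if `A` is integrally closed and `B` is a going down overring, `s` is a unit of `B`:
otherwise a minimal prime of `(s)` below a maximal ideal of `B` containing `s` would contain `t`.
Then `x s` is integral over `A`, so `x ∈ A[1/s]` and `B` is a ring of fractions of `A`.
-/

def GaussCoprime {M : Type*} [CommMonoid M] (s t : M) : Prop :=
  ∀ w, s ∣ t * w → s ∣ w

theorem GaussCoprime.isUnit_of_dvd_pow {M : Type*} [CommMonoid M] {s t : M}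
    (h : GaussCoprime s t) {m : ℕ} (hm : s ∣ t ^ m) : IsUnit s := by
  induction m with
  | zero => exact isUnit_of_dvd_one (by simpa using hm)
  | succ m ih => exact ih (h _ (pow_succ' t m ▸ hm))

theorem GaussCoprime.notMem_of_mem_minimalPrimes {R : Type*} [CommRing R] {s t : R}
    (h : GaussCoprime s t) {P : Ideal R} (hP : P ∈ (Ideal.span {s}).minimalPrimes) : t ∉ P :=
  fun htP => by
    obtain ⟨y, hy, hty⟩ := Ideal.exists_mul_mem_of_mem_minimalPrimes hP htP
    rw [Ideal.mem_span_singleton] at hy hty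
    exact hy (h y hty)

theorem exists_gaussCoprime_of_inf_span_eq {R : Type*} [CommRing R] [IsDomain R] {a b z : R}
    (ha : a ≠ 0) (hb : b ≠ 0) (hz : Ideal.span {a} ⊓ Ideal.span {b} = Ideal.span {z}) :
    ∃ s t : R, GaussCoprime s t ∧ a * s = b * t := by
  have hmem : ∀ w, z ∣ w ↔ a ∣ w ∧ b ∣ w := fun w => by
    rw [← Ideal.mem_span_singleton, ← hz, Ideal.mem_inf, Ideal.mem_span_singleton,
      Ideal.mem_span_singleton]
  obtain ⟨⟨s, hs⟩, t, ht⟩ := (hmem z).1 dvd_rfl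
  obtain ⟨d, hd⟩ := (hmem (a * b)).2 ⟨dvd_mul_right a b, dvd_mul_left b a⟩
  have hbd : b = s * d := mul_left_cancel₀ ha (by rw [hd, hs, mul_assoc])
  have had : a = t * d := mul_left_cancel₀ hb (by rw [mul_comm b a, hd, ht, mul_assoc])
  refine ⟨s, t, fun w ⟨u, hu⟩ => ?_, hs.symm.trans ht⟩
  obtain ⟨e, he⟩ := (hmem (a * w)).2
    ⟨dvd_mul_right a w, ⟨u, by rw [had, hbd]; linear_combination d * hu⟩⟩
  exact ⟨e, mul_left_cancel₀ ha (by rw [he, hs, mul_assoc])⟩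

theorem isLocalization_comap_isUnit_submonoid {R S : Type*} [CommRing R] [CommRing S]
    [Algebra R S] (hinj : Function.Injective (algebraMap R S))
    (h : ∀ z : S, ∃ a s : R, IsUnit (algebraMap R S s) ∧ z * algebraMap R S s = algebraMap R S a) :
    IsLocalization ((IsUnit.submonoid S).comap (algebraMap R S)) S := by
  refine (isLocalization_iff _ _).2
    ⟨fun s => s.2, fun z => ?_, fun hxy => ⟨1, by rw [hinj hxy]⟩⟩
  obtain ⟨a, s, hs, hz⟩ := h z
  exact ⟨(a, ⟨s, hs⟩), hz⟩

def IsRootExtension (A B : Type*) [CommRing A] [CommRing B] [Algebra A B] : Prop :=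
  ∀ x : B, ∃ n ≠ 0, x ^ n ∈ Set.range (algebraMap A B)

section FractionField

variable {A K : Type*} [CommRing A] [IsDomain A] [Field K] [Algebra A K] [IsFractionRing A K]

theorem Subalgebra.eq_bot_of_faithfullyFlat (B : Subalgebra A K) [Module.FaithfullyFlat A B] :
    B = ⊥ := by
  refine eq_bot_iff.2 fun x hx => ?_
  obtain ⟨a, σ, hσ, rfl⟩ := IsFractionRing.div_surjective (A := A) x
  have hσ' : algebraMap A K σ ≠ 0 := IsFractionRing.to_map_ne_zero_of_mem_nonZeroDivisors hσ
  have ha : algebraMap A B a ∈ (Ideal.span {σ}).map (algebraMap A B) := by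
    rw [Ideal.map_span, Set.image_singleton, Ideal.mem_span_singleton]
    exact ⟨⟨_, hx⟩, Subtype.ext (by simp [mul_div_cancel₀ _ hσ'])⟩
  rw [← Ideal.mem_comap, Ideal.comap_map_eq_self_of_faithfullyFlat,
    Ideal.mem_span_singleton] at ha
  obtain ⟨c, rfl⟩ := ha
  exact Algebra.mem_bot.2 ⟨c, by rw [map_mul, mul_div_cancel_left₀ _ hσ']⟩

theorem IsAGCD.exists_gaussCoprime_mul_pow_eq (hA : IsAGCD A) (x : K) :
    ∃ n ≠ 0, ∃ s t : A, GaussCoprime s t ∧ algebraMap A K s * x ^ n = algebraMap A K t := by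
  obtain ⟨a, b, hb, rfl⟩ := IsFractionRing.div_surjective (A := A) x
  by_cases ha : a = 0
  · exact ⟨1, one_ne_zero, 1, 0, fun w _ => one_dvd w, by simp [ha]⟩
  obtain ⟨n, hn, z, hz⟩ := hA a b
  obtain ⟨s, t, hst, heq⟩ := exists_gaussCoprime_of_inf_span_eq (pow_ne_zero n ha)
    (pow_ne_zero n (nonZeroDivisors.ne_zero hb)) hz
  refine ⟨n, by omega, s, t, hst, ?_⟩
  rw [div_pow, mul_div_assoc', div_eq_iff
    (pow_ne_zero _ (IsFractionRing.to_map_ne_zero_of_mem_nonZeroDivisors hb)),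
    ← map_pow, ← map_pow, ← map_mul, ← map_mul, mul_comm, heq, mul_comm]

theorem IsAGCD.exists_pow_eq_algebraMap_of_isIntegral (hA : IsAGCD A) {x : K}
    (hx : IsIntegral A x) : ∃ n ≠ 0, ∃ w : A, x ^ n = algebraMap A K w := by
  obtain ⟨n, hn, s, t, hst, hx'⟩ := hA.exists_gaussCoprime_mul_pow_eq x
  obtain ⟨p, hp, hpx⟩ := hx.pow n
  obtain ⟨u, rfl⟩ := hst.isUnit_of_dvd_pow (Polynomial.dvd_pow_natDegree_of_aeval_eq_zero hp
    s t (x ^ n) (by rwa [Polynomial.aeval_def]) (by rw [mul_comm, hx']))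
  refine ⟨n, hn, t * ↑u⁻¹, ?_⟩
  rw [map_mul, ← hx', mul_comm, ← mul_assoc, ← map_mul, Units.inv_mul, map_one, one_mul]

theorem IsAGCD.isRootExtension_integralClosure (hA : IsAGCD A) :
    IsRootExtension A (integralClosure A K) := fun x => by
  obtain ⟨n, hn, w, hw⟩ := hA.exists_pow_eq_algebraMap_of_isIntegral x.2
  exact ⟨n, hn, w, Subtype.ext hw.symm⟩

end FractionField

section Overring

variable {A : Type*} [CommRing A]

theorem GoingDownOverring.isUnit_of_dvd {B : Subalgebra A (FractionRing A)}
    (hB : GoingDownOverring A B) {s t : A} (hst : GaussCoprime s t)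
    (hdvd : algebraMap A B s ∣ algebraMap A B t) : IsUnit (algebraMap A B s) := by
  by_contra hs
  obtain ⟨Q, hQ, hsQ⟩ := Ideal.exists_le_maximal (Ideal.span {algebraMap A B s})
    (by rwa [Ne, Ideal.span_singleton_eq_top])
  have hsP : s ∈ Q.comap (algebraMap A B) := hsQ (Ideal.mem_span_singleton_self _)
  obtain ⟨P', hP', hP'P⟩ :=
    Ideal.exists_minimalPrimes_le ((Ideal.span_singleton_le_iff_mem _).2 hsP)
  obtain ⟨Q', -, -, hQ'P'⟩ := hB P' _ hP'.1.1 inferInstance hP'P Q hQ.isPrime rfl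
  have hsQ' : algebraMap A B s ∈ Q' := by
    rw [← Ideal.mem_comap, hQ'P']
    exact hP'.1.2 (Ideal.mem_span_singleton_self s)
  apply hst.notMem_of_mem_minimalPrimes hP'
  rw [← hQ'P', Ideal.mem_comap]
  exact Q'.mem_of_dvd hdvd hsQ'

theorem GloballyPerinormal.perinormal (h : GloballyPerinormal A) : Perinormal A := fun B hB =>
  have ⟨S, _⟩ := h B hB
  IsLocalization.flat B S

variable [IsDomain A]

theorem goingDownOverring_of_isRootExtension {B : Subalgebra A (FractionRing A)}
    (hB : IsRootExtension A B) : GoingDownOverring A B := by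
  have : Algebra.IsIntegral A B := ⟨fun x => by
    obtain ⟨n, hn, w, hw⟩ := hB x
    exact IsIntegral.of_pow (Nat.pos_of_ne_zero hn) (hw ▸ isIntegral_algebraMap)⟩
  intro P' P hP' hP hle Q hQ hQP
  obtain ⟨Q', hQ', hQ'P'⟩ := Ideal.exists_ideal_over_prime_of_isIntegral_of_isDomain (S := B) P'
    (by simp [(RingHom.injective_iff_ker_eq_bot _).mp (FaithfulSMul.algebraMap_injective A B)])
  refine ⟨Q', hQ', fun x hx => ?_, hQ'P'⟩
  obtain ⟨n, hn, w, hw⟩ := hB x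
  have hwP' : w ∈ P' := by
    rw [← hQ'P', Ideal.mem_comap, hw]
    exact Q'.pow_mem_of_mem hx n (Nat.pos_of_ne_zero hn)
  have hwQ : algebraMap A B w ∈ Q := by
    rw [← Ideal.mem_comap, hQP]
    exact hle hwP'
  exact hQ.mem_of_pow_mem n (hw ▸ hwQ)

theorem IsAGCD.exists_mul_eq_of_goingDownOverring [IsIntegrallyClosed A] (hA : IsAGCD A)
    {B : Subalgebra A (FractionRing A)} (hB : GoingDownOverring A B) (z : B) :
    ∃ a s : A, IsUnit (algebraMap A B s) ∧ z * algebraMap A B s = algebraMap A B a := by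
  obtain ⟨n, hn, s, t, hst, hz⟩ := hA.exists_gaussCoprime_mul_pow_eq (z : FractionRing A)
  have hs := hB.isUnit_of_dvd hst ⟨z ^ n, (Subtype.ext hz).symm⟩
  have hpow : ((z : FractionRing A) * algebraMap A _ s) ^ n =
      algebraMap A _ (s ^ (n - 1) * t) := by
    rw [map_mul, ← hz, map_pow, ← mul_assoc, ← pow_succ,
      Nat.sub_add_cancel (Nat.pos_of_ne_zero hn), mul_pow, mul_comm]
  obtain ⟨a, ha⟩ := IsIntegrallyClosed.isIntegral_iff.1
    (IsIntegral.of_pow (Nat.pos_of_ne_zero hn) (hpow ▸ isIntegral_algebraMap))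
  exact ⟨a, s, hs, Subtype.ext ha.symm⟩

theorem IsAGCD.globallyPerinormal [IsIntegrallyClosed A] (hA : IsAGCD A) :
    GloballyPerinormal A := fun B hB =>
  ⟨_, isLocalization_comap_isUnit_submonoid (FaithfulSMul.algebraMap_injective A B)
    (hA.exists_mul_eq_of_goingDownOverring hB)⟩

theorem IsAGCD.isIntegrallyClosed_of_perinormal (hA : IsAGCD A) (h : Perinormal A) :
    IsIntegrallyClosed A := by
  have : Module.Flat A (integralClosure A (FractionRing A)) :=
    h _ (goingDownOverring_of_isRootExtension hA.isRootExtension_integralClosure)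
  exact (IsIntegrallyClosed.integralClosure_eq_bot_iff (FractionRing A)).1
    (Subalgebra.eq_bot_of_faithfullyFlat _)

end Overring

/-- for an AGCD domain, globally perinormal ⟺ perinormal ⟺ integrally closed. -/
theorem agcd_perinormal_tfae (A : Type*) [CommRing A] [IsDomain A]
    (hA : IsAGCD A) :
    (GloballyPerinormal A ↔ Perinormal A) ∧ (Perinormal A ↔ IsIntegrallyClosed A) := by
  have hgp : IsIntegrallyClosed A → GloballyPerinormal A := fun _ => hA.globallyPerinormal
  exact ⟨⟨GloballyPerinormal.perinormal, fun h => hgp (hA.isIntegrallyClosed_of_perinormal h)⟩,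
    ⟨hA.isIntegrallyClosed_of_perinormal, fun h => (hgp h).perinormal⟩⟩
end

section
/- Let A ⊆ B be a root extension of integral domains (every x ∈ B has xⁿ ∈ A for some n ≥ 1). If B is an overring of A that is flat as an A-module, then A = B. -/
open scoped nonZeroDivisors

/-!
Write `x ∈ B` as `x = a / s` with `a, s ∈ A`. Flatness of `B` factors the relation `s • x = a • 1`
through finitely many `y_j ∈ B`, with `1 = ∑ d_j y_j` and every `d_j x ∈ A`; so the conductor
`(A :_A x)` extends to the unit ideal of `B`. Since `B` is integral over `A`, lying over forbids a
proper ideal of `A` from extending to `B`, hence `(A :_A x) = A` and `x ∈ A`.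
-/

theorem Module.Flat.exists_sum_of_smul_eq_smul {R M : Type*} [CommRing R] [AddCommGroup M]
    [Module R M] [Module.Flat R M] {s a : R} {m n : M} (h : s • m = a • n) :
    ∃ (k : ℕ) (c d : Fin k → R) (y : Fin k → M),
      m = ∑ j, c j • y j ∧ n = ∑ j, d j • y j ∧ ∀ j, s * c j = a * d j := by
  have hrel : ∑ i, ![s, -a] i • ![m, n] i = 0 := by
    simp [Fin.sum_univ_two, h]
  obtain ⟨k, c, y, hy, hc⟩ := Module.Flat.isTrivialRelation_of_sum_smul_eq_zero hrel
  refine ⟨k, c 0, c 1, y, hy 0, hy 1, fun j => ?_⟩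
  have hcj := hc j
  simp only [Fin.sum_univ_two, Matrix.cons_val_zero, Matrix.cons_val_one] at hcj
  linear_combination hcj

theorem Module.Flat.map_one_colon_singleton_eq_top {R B : Type*} [CommRing R] [CommRing B]
    [Algebra R B] [Module.Flat R B] {b : B} {s a : R} (hs : IsSMulRegular B s)
    (h : s • b = algebraMap R B a) :
    ((1 : Submodule R B).colon {b}).map (algebraMap R B) = ⊤ := by
  have h' : s • b = a • (1 : B) := by rw [h, Algebra.algebraMap_eq_smul_one]
  obtain ⟨k, c, d, y, -, h1, hcd⟩ := Module.Flat.exists_sum_of_smul_eq_smul (R := R) (M := B) h'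
  have hd : ∀ j, d j • b = algebraMap R B (c j) := fun j => hs <| by
    change s • d j • b = s • algebraMap R B (c j)
    rw [smul_comm, h, Algebra.smul_def, ← map_mul, mul_comm, ← hcd, map_mul, ← Algebra.smul_def]
  rw [Ideal.eq_top_iff_one, h1]
  refine Ideal.sum_mem _ fun j _ => ?_
  rw [Algebra.smul_def]
  exact Ideal.mul_mem_right _ _ <| Ideal.mem_map_of_mem _ <|
    Submodule.mem_colon_singleton.mpr <| Submodule.mem_one.mpr ⟨c j, (hd j).symm⟩

theorem Subalgebra.exists_smul_eq_algebraMap_of_isFractionRing {A K : Type*} [CommRing A]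
    [CommRing K] [Algebra A K] [IsFractionRing A K] (B : Subalgebra A K) (x : B) :
    ∃ s ∈ A⁰, ∃ a : A, s • x = algebraMap A B a := by
  obtain ⟨⟨a, s⟩, hs⟩ := IsLocalization.surj A⁰ (x : K)
  refine ⟨s, s.2, a, Subtype.ext ?_⟩
  simpa [Algebra.smul_def, mul_comm] using hs

theorem Algebra.IsIntegral.of_pow_mem_range {R S : Type*} [CommRing R] [CommRing S]
    [Algebra R S] (h : ∀ x : S, ∃ n : ℕ, 1 ≤ n ∧ x ^ n ∈ (algebraMap R S).range) :
    Algebra.IsIntegral R S := by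
  refine ⟨fun x => ?_⟩
  obtain ⟨n, hn, a, ha⟩ := h x
  exact (ha ▸ isIntegral_algebraMap : IsIntegral R (x ^ n)).of_pow hn

/-- a flat overring which is a root extension coincides with the base. -/
theorem flat_root_extension_overring_eq
    (A : Type*) [CommRing A] [IsDomain A] (B : Subalgebra A (FractionRing A))
    (hroot : ∀ x : B, ∃ n : ℕ, 1 ≤ n ∧ x ^ n ∈ (algebraMap A B).range)
    (hflat : Module.Flat A B) : B = ⊥ := by
  have hint : (algebraMap A B).IsIntegral :=
    algebraMap_isIntegral_iff.mpr (Algebra.IsIntegral.of_pow_mem_range hroot)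
  refine eq_bot_iff.mpr fun x hx => ?_
  obtain ⟨s, hs, a, hsa⟩ := B.exists_smul_eq_algebraMap_of_isFractionRing ⟨x, hx⟩
  have hreg : IsSMulRegular B s :=
    Module.IsTorsionFree.isSMulRegular (IsRegular.of_ne_zero (nonZeroDivisors.ne_zero hs))
  have hcolon : (1 : Submodule A B).colon {⟨x, hx⟩} = ⊤ :=
    (Ideal.map_eq_top_iff _ (FaithfulSMul.algebraMap_injective A B) hint).mp
      (Module.Flat.map_one_colon_singleton_eq_top hreg hsa)
  obtain ⟨t, ht⟩ := Submodule.mem_one.mp <| Submodule.mem_colon_singleton.mp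
    (hcolon ▸ Submodule.mem_top : (1 : A) ∈ _)
  exact Algebra.mem_bot.mpr ⟨t, by simpa using congrArg Subtype.val ht⟩
end
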